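/- arXiv:1404.3417 — 6 statements merged into one kernel-verified Lean document; each statement's English description precedes it below -/
import Mathlib

section
/- Let f : X → Y be a closed irreducible continuous surjection between topological spaces. Then X is I-favorable if and only if Y is I-favorable. -/
/-- A topological space `X` is I-favorable if there is a strategy `σ` assigning to each
finite (possibly empty) sequence of open subsets of `X` an open subset of `X` such that
whenever `B₀, B₁, …` are nonempty open sets with `B₀ ⊆ σ ∅` and `B_{k+1} ⊆ σ (B₀,…,B_k)`,
the union `⋃ k, B k` is dense in `X`. (For the empty space the nonemptiness requirement
on the values of `σ` is vacuous.) -/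
def IFavorable (X : Type*) [TopologicalSpace X] : Prop :=
  ∃ σ : List (Set X) → Set X,
    (∀ l, IsOpen (σ l)) ∧
    (∀ l, Nonempty X → (σ l).Nonempty) ∧
    ∀ B : ℕ → Set X, (∀ k, IsOpen (B k)) → (∀ k, (B k).Nonempty) →
      B 0 ⊆ σ [] →
      (∀ k, B (k + 1) ⊆ σ (List.ofFn fun i : Fin (k + 1) => B i)) →
      Dense (⋃ k, B k)

/-- `f : X → Y` is a closed irreducible continuous surjection: it is continuous, closed,
surjective, and `f '' F ≠ Y` for every proper closed subset `F ⊊ X`. -/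
def ClosedIrreducibleSurjection {X Y : Type*} [TopologicalSpace X] [TopologicalSpace Y]
    (f : X → Y) : Prop :=
  Continuous f ∧ IsClosedMap f ∧ Function.Surjective f ∧
    ∀ F : Set X, IsClosed F → F ≠ Set.univ → f '' F ≠ Set.univ

/-!
Strategies are carried along `f` in both directions by two translations of open sets:
the preimage `f ⁻¹' V` and the small image `Set.kernImage f U = {y | f ⁻¹' {y} ⊆ U}`,
which is open because `f` is closed. Both translations send nonempty open sets to nonempty
open sets (the small image thanks to irreducibility), and translating a move back and forth
only shrinks it, so a play answering the transported strategy translates into a play answering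
the original one. Density of the union passes back through `f` by continuity in one direction
and, in the other, because irreducibility makes preimages of dense sets dense.
-/

open Set

namespace IFavorable

variable {X Y : Type*} [TopologicalSpace X] [TopologicalSpace Y]

theorem of_translation (e : Set X → Set Y) (r : Set Y → Set X)
    (he_open : ∀ U, IsOpen U → IsOpen (e U))
    (he_nonempty : ∀ U, IsOpen U → U.Nonempty → (e U).Nonempty)
    (hr_open : ∀ V, IsOpen V → IsOpen (r V))
    (hr_nonempty : ∀ V, IsOpen V → V.Nonempty → (r V).Nonempty)
    (hr_mono : Monotone r) (hre : ∀ U, r (e U) ⊆ U)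
    (hdense : ∀ B : ℕ → Set Y, Dense (⋃ k, r (B k)) → Dense (⋃ k, B k))
    (hX : IFavorable X) : IFavorable Y := by
  obtain ⟨σ, hσ_open, hσ_nonempty, hσ_wins⟩ := hX
  refine ⟨fun l => e (σ (l.map r)), fun _ => he_open _ (hσ_open _),
    fun _ _ => he_nonempty _ (hσ_open _) (hσ_nonempty _ ?_),
    fun B hB_open hB_nonempty hB_zero hB_succ => hdense B ?_⟩
  · obtain ⟨x, -⟩ := hr_nonempty univ isOpen_univ univ_nonempty
    exact ⟨x⟩
  refine hσ_wins (fun k => r (B k)) (fun k => hr_open _ (hB_open k))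
    (fun k => hr_nonempty _ (hB_open k) (hB_nonempty k)) ((hr_mono hB_zero).trans (hre _))
    fun k => ?_
  have hmove := (hr_mono (hB_succ k)).trans (hre _)
  rwa [List.map_ofFn] at hmove

end IFavorable

namespace ClosedIrreducibleSurjection

variable {X Y : Type*} [TopologicalSpace X] [TopologicalSpace Y] {f : X → Y}

protected theorem continuous (hf : ClosedIrreducibleSurjection f) : Continuous f := hf.1

protected theorem isClosedMap (hf : ClosedIrreducibleSurjection f) : IsClosedMap f := hf.2.1

protected theorem surjective (hf : ClosedIrreducibleSurjection f) : Function.Surjective f :=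
  hf.2.2.1

theorem image_ne_univ (hf : ClosedIrreducibleSurjection f) {F : Set X} (hF : IsClosed F)
    (hF_ne : F ≠ univ) : f '' F ≠ univ :=
  hf.2.2.2 F hF hF_ne

theorem isOpen_kernImage (hf : ClosedIrreducibleSurjection f) {U : Set X} (hU : IsOpen U) :
    IsOpen (kernImage f U) :=
  isClosedMap_iff_kernImage.mp hf.isClosedMap hU

theorem kernImage_nonempty (hf : ClosedIrreducibleSurjection f) {U : Set X} (hU : IsOpen U)
    (hU_nonempty : U.Nonempty) : (kernImage f U).Nonempty := by
  rw [kernImage_eq_compl, nonempty_compl]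
  exact hf.image_ne_univ hU.isClosed_compl (compl_ne_univ.mpr hU_nonempty)

theorem dense_preimage (hf : ClosedIrreducibleSurjection f) {s : Set Y} (hs : Dense s) :
    Dense (f ⁻¹' s) := by
  by_contra hnot
  refine hf.image_ne_univ isClosed_closure (mt dense_iff_closure_eq.mpr hnot) ?_
  have hs_subset : s ⊆ f '' closure (f ⁻¹' s) :=
    (image_preimage_eq s hf.surjective).superset.trans (image_mono subset_closure)
  rw [← (hf.isClosedMap _ isClosed_closure).closure_eq]
  exact (hs.mono hs_subset).closure_eq

theorem ifavorable_of_domain (hf : ClosedIrreducibleSurjection f) (hX : IFavorable X) :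
    IFavorable Y := by
  refine hX.of_translation (kernImage f) (preimage f)
    (fun _ => hf.isOpen_kernImage) (fun _ => hf.kernImage_nonempty)
    (fun _ hV => hV.preimage hf.continuous) (fun _ _ => hf.surjective.nonempty_preimage.mpr)
    (fun _ _ => preimage_mono) (fun _ => Set.preimage_kernImage.l_u_le _) fun B hB => ?_
  refine hf.surjective.denseRange.dense_of_mapsTo hf.continuous hB ?_
  rw [← preimage_iUnion]
  exact mapsTo_preimage f _

theorem ifavorable_of_codomain (hf : ClosedIrreducibleSurjection f) (hY : IFavorable Y) :
    IFavorable X := by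
  refine hY.of_translation (preimage f) (kernImage f)
    (fun _ hV => hV.preimage hf.continuous) (fun _ _ => hf.surjective.nonempty_preimage.mpr)
    (fun _ => hf.isOpen_kernImage) (fun _ => hf.kernImage_nonempty) kernImage_mono
    (fun _ => (kernImage_preimage_eq_iff.mpr (by simp [hf.surjective.range_eq])).subset)
    fun A hA => (hf.dense_preimage hA).mono ?_
  rw [preimage_iUnion]
  exact iUnion_mono fun k => Set.preimage_kernImage.l_u_le (A k)

end ClosedIrreducibleSurjection

/-- If `f : X → Y` is a closed irreducible continuous surjection, then
`X` is I-favorable if and only if `Y` is I-favorable. -/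
theorem ifavorable_iff_of_closedIrreducibleSurjection {X Y : Type*}
    [TopologicalSpace X] [TopologicalSpace Y] (f : X → Y)
    (hf : ClosedIrreducibleSurjection f) :
    IFavorable X ↔ IFavorable Y :=
  ⟨hf.ifavorable_of_domain, hf.ifavorable_of_codomain⟩
end

section
/- If a Tychonoff space X is I-favorable, then every compactification of X is I-favorable; that is, for every compact Hausdorff space cX containing X as a dense subspace, cX is I-favorable. -/
/-!
A winning strategy `σ` on `X` transfers to `cX`: play the largest open set of `cX` whose trace
on `X` is the answer of `σ` to the traces of the moves so far. Traces of nonempty open sets are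
nonempty since `X` is dense, so the traces form a legal play against `σ`, their union is dense
in `X`, and its image, which lies in the union of the moves, is dense in `cX`.
-/

open Set Topology

namespace Topology.IsInducing

variable {X Y : Type*} [TopologicalSpace X] [TopologicalSpace Y] {i : X → Y}

lemma preimage_interior_kernImage (hi : IsInducing i) {U : Set X} (hU : IsOpen U) :
    i ⁻¹' interior (kernImage i U) = U := by
  refine ((preimage_mono interior_subset).trans (subset_kernImage_iff.1 subset_rfl)).antisymm ?_
  obtain ⟨V, hV, rfl⟩ := hi.isOpen_iff.1 hU
  exact preimage_mono (hV.subset_interior_iff.2 (subset_kernImage_iff.2 subset_rfl))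

end Topology.IsInducing

theorem IFavorable.of_isInducing_denseRange {X Y : Type*} [TopologicalSpace X]
    [TopologicalSpace Y] {i : X → Y} (hX : IFavorable X) (hi : IsInducing i)
    (hd : DenseRange i) : IFavorable Y := by
  obtain ⟨σ, hσ_open, hσ_ne, hσ_dense⟩ := hX
  let τ : List (Set Y) → Set Y := fun l => interior (kernImage i (σ (l.map (i ⁻¹' ·))))
  have hτ : ∀ l, i ⁻¹' τ l = σ (l.map (i ⁻¹' ·)) :=
    fun l => hi.preimage_interior_kernImage (hσ_open _)
  refine ⟨τ, fun _ => isOpen_interior, fun l hY => ?_, fun B hB_open hB_ne hB_zero hB_succ => ?_⟩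
  · obtain ⟨x, hx⟩ := hσ_ne (l.map (i ⁻¹' ·)) (hd.nonempty_iff.2 hY)
    exact ⟨i x, (hτ l).superset hx⟩
  · have hdense : Dense (⋃ k, i ⁻¹' B k) := by
      refine hσ_dense _ (fun k => (hB_open k).preimage hi.continuous)
        (fun k => hd.exists_mem_open (hB_open k) (hB_ne k)) ?_ fun k => ?_
      · exact (preimage_mono hB_zero).trans (hτ []).subset
      · simpa only [hτ, List.map_ofFn, Function.comp_def] using preimage_mono (f := i) (hB_succ k)
    rw [← preimage_iUnion] at hdense
    exact hd.dense_of_mapsTo hi.continuous hdense (mapsTo_preimage _ _)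

theorem ifavorable_compactification_general {X : Type u} [TopologicalSpace X]
    (hX : IFavorable X) (cX : Type v) [TopologicalSpace cX]
    (i : X → cX) (hi : Topology.IsEmbedding i) (hd : DenseRange i) :
    IFavorable cX :=
  hX.of_isInducing_denseRange hi.isInducing hd

/-- If a Tychonoff space `X` is I-favorable, then every compactification
of `X` is I-favorable: for every compact Hausdorff space `cX` containing `X` as a dense
subspace (via a dense topological embedding `i`), `cX` is I-favorable. -/
theorem ifavorable_compactification {X : Type u} [TopologicalSpace X] [T35Space X]
    (hX : IFavorable X) (cX : Type v) [TopologicalSpace cX] [CompactSpace cX] [T2Space cX]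
    (i : X → cX) (hi : Topology.IsEmbedding i) (hd : DenseRange i) :
    IFavorable cX :=
  ifavorable_compactification_general hX cX i hi hd
end

section
/- Every space co-absolute to a κ-metrizable compact Hausdorff space is I-favorable; that is, if K is a κ-metrizable compact Hausdorff space, Z is a space, and there exist closed irreducible continuous surjections Z → K and Z → Y, then Y is I-favorable. -/
/-- A set `C` is regular closed if it equals the closure of its interior. -/
def IsRegularClosed {K : Type*} [TopologicalSpace K] (C : Set K) : Prop :=
  C = closure (interior C)

/-- A compact Hausdorff space `K` is κ-metrizable if there is a function `ρ x C ≥ 0`,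
defined for points `x ∈ K` and nonempty regular closed `C ⊆ K`, with: `ρ x C = 0 ↔ x ∈ C`;
`C ⊆ C'` implies `ρ x C' ≤ ρ x C`; `x ↦ ρ x C` is continuous; and
`ρ x (cl (⋃ α, C α)) = ⨅ α, ρ x (C α)` for every increasing (transfinite) chain `C α`
of nonempty regular closed sets. -/
def KappaMetrizable (K : Type u) [TopologicalSpace K] : Prop :=
  ∃ ρ : K → Set K → ℝ,
    (∀ (x : K) (C : Set K), IsRegularClosed C → C.Nonempty → 0 ≤ ρ x C) ∧
    (∀ (x : K) (C : Set K), IsRegularClosed C → C.Nonempty → (ρ x C = 0 ↔ x ∈ C)) ∧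
    (∀ (x : K) (C C' : Set K), IsRegularClosed C → C.Nonempty →
      IsRegularClosed C' → C'.Nonempty → C ⊆ C' → ρ x C' ≤ ρ x C) ∧
    (∀ C : Set K, IsRegularClosed C → C.Nonempty → Continuous fun x => ρ x C) ∧
    (∀ (ι : Type u) [LinearOrder ι] [Nonempty ι] (C : ι → Set K), Monotone C →
      (∀ α, IsRegularClosed (C α) ∧ (C α).Nonempty) →
      ∀ x : K, ρ x (closure (⋃ α, C α)) = ⨅ α, ρ x (C α))

/-!
A closed irreducible surjection `f` transports I-favorability both ways: strategies are moved
along `f` with preimages and small images `f♯`, because `f♯` keeps nonempty open sets nonempty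
and open, and `f` pulls dense sets back to dense sets. So it suffices that a κ-metrizable compact
space `K` is I-favorable. Against `B₀, …, B_k` the strategy plays the set where `ρ(·, C_k)`,
`C_k = cl (B₀ ∪ … ∪ B_k)`, exceeds half its supremum `m_k`. By the chain axiom the continuous
functions `ρ(·, C_k)` decrease pointwise to the continuous `ρ(·, cl ⋃ B_k)`, so by Dini's theorem
uniformly. The limit vanishes at a point of `B_{k+1}`, where `ρ(·, C_k) ≥ m_k / 2`; hence
`m_k → 0`, the limit vanishes everywhere, and `cl ⋃ B_k = K`.
-/

open Set Filter Topology

lemma IsOpen.isRegularClosed_closure {K : Type*} [TopologicalSpace K] {U : Set K}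
    (hU : IsOpen U) : IsRegularClosed (closure U) :=
  (closure_mono (interior_maximal subset_closure hU)).antisymm
    (closure_minimal interior_subset isClosed_closure)

lemma closure_iUnion_closure {K ι : Type*} [TopologicalSpace K] (s : ι → Set K) :
    closure (⋃ i, closure (s i)) = closure (⋃ i, s i) :=
  (closure_minimal (iUnion_subset fun i => closure_mono (subset_iUnion s i))
    isClosed_closure).antisymm
    (closure_mono (iUnion_mono fun _ => subset_closure))

lemma biUnion_mem_ofFn_eq_accumulate {α : Type*} (B : ℕ → Set α) (k : ℕ) :
    ⋃ S ∈ List.ofFn (fun i : Fin (k + 1) => B i), S = accumulate B k := by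
  ext x
  simp only [mem_iUnion, List.mem_ofFn, mem_accumulate, exists_prop]
  constructor
  · rintro ⟨_, ⟨i, rfl⟩, hx⟩
    exact ⟨i, Nat.lt_succ_iff.mp i.2, hx⟩
  · rintro ⟨i, hi, hx⟩
    exact ⟨_, ⟨⟨i, Nat.lt_succ_of_le hi⟩, rfl⟩, hx⟩

lemma isOpen_accumulate {K : Type*} [TopologicalSpace K] {B : ℕ → Set K}
    (hB : ∀ k, IsOpen (B k)) (k : ℕ) : IsOpen (accumulate B k) :=
  isOpen_biUnion fun i _ => hB i

section smallImage

variable {X Y : Type*} {f : X → Y}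

/-- The small image `f♯ U = {y | f ⁻¹' {y} ⊆ U}`. -/
def smallImage (f : X → Y) (U : Set X) : Set Y := (f '' Uᶜ)ᶜ

lemma preimage_smallImage_subset (f : X → Y) (U : Set X) : f ⁻¹' smallImage f U ⊆ U :=
  fun _ hx => by_contra fun hxU => hx (mem_image_of_mem f hxU)

lemma smallImage_subset_of_subset_preimage (hf : Function.Surjective f) {U : Set X} {V : Set Y}
    (h : U ⊆ f ⁻¹' V) : smallImage f U ⊆ V := by
  intro y hy
  obtain ⟨x, rfl⟩ := hf y
  by_contra hyV
  exact hy ⟨x, fun hxU => hyV (h hxU), rfl⟩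

variable [TopologicalSpace X] [TopologicalSpace Y]

lemma IsOpen.smallImage (hf : IsClosedMap f) {U : Set X} (hU : IsOpen U) :
    IsOpen (smallImage f U) :=
  (hf _ hU.isClosed_compl).isOpen_compl

lemma ClosedIrreducibleSurjection.smallImage_nonempty (hf : ClosedIrreducibleSurjection f)
    {U : Set X} (hU : IsOpen U) (hne : U.Nonempty) : (smallImage f U).Nonempty :=
  nonempty_compl.mpr <| hf.2.2.2 _ hU.isClosed_compl fun h => (h ▸ mem_univ hne.some) hne.some_mem

lemma ClosedIrreducibleSurjection.dense_preimage_s6 (hf : ClosedIrreducibleSurjection f)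
    {D : Set Y} (hD : Dense D) : Dense (f ⁻¹' D) := by
  refine dense_iff_inter_open.mpr fun U hU hne => ?_
  obtain ⟨y, hyU, hyD⟩ :=
    hD.inter_open_nonempty _ (hU.smallImage hf.2.1) (hf.smallImage_nonempty hU hne)
  obtain ⟨x, rfl⟩ := hf.2.2.1 y
  exact ⟨x, preimage_smallImage_subset f U hyU, hyD⟩

end smallImage

section transfer

variable {X Y : Type*} [TopologicalSpace X] [TopologicalSpace Y] {f : X → Y}

lemma IFavorable.map (hf : ClosedIrreducibleSurjection f) (h : IFavorable X) :
    IFavorable Y := by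
  obtain ⟨σ, hσ_open, hσ_ne, hσ_wins⟩ := h
  refine ⟨fun l => smallImage f (σ (l.map (f ⁻¹' ·))), fun l => (hσ_open _).smallImage hf.2.1,
    fun l _ => hf.smallImage_nonempty (hσ_open _) (hσ_ne _ hf.2.2.1.nonempty),
    fun V hV_open hV_ne hV₀ hV => ?_⟩
  have hdense : Dense (f ⁻¹' ⋃ k, V k) := by
    rw [preimage_iUnion]
    refine hσ_wins (fun k => f ⁻¹' V k) (fun k => (hV_open k).preimage hf.1)
      (fun k => (hV_ne k).preimage hf.2.2.1)
      ((preimage_mono hV₀).trans (preimage_smallImage_subset _ _)) fun k => ?_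
    simpa only [List.map_ofFn, Function.comp_def] using
      (preimage_mono (hV k)).trans (preimage_smallImage_subset _ _)
  exact (hf.2.2.1.denseRange.dense_image hf.1 hdense).mono (image_preimage_subset _ _)

lemma IFavorable.comap (hf : ClosedIrreducibleSurjection f) (h : IFavorable Y) :
    IFavorable X := by
  obtain ⟨σ, hσ_open, hσ_ne, hσ_wins⟩ := h
  refine ⟨fun l => f ⁻¹' σ (l.map (smallImage f)), fun l => (hσ_open _).preimage hf.1,
    fun l hX => (hσ_ne _ (hX.map f)).preimage hf.2.2.1, fun B hB_open hB_ne hB₀ hB => ?_⟩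
  have hdense : Dense (⋃ k, smallImage f (B k)) :=
    hσ_wins _ (fun k => (hB_open k).smallImage hf.2.1)
      (fun k => hf.smallImage_nonempty (hB_open k) (hB_ne k))
      (smallImage_subset_of_subset_preimage hf.2.2.1 hB₀) fun k =>
        smallImage_subset_of_subset_preimage hf.2.2.1 <| by
          simpa only [List.map_ofFn, Function.comp_def] using hB k
  refine (hf.dense_preimage_s6 hdense).mono ?_
  rw [preimage_iUnion]
  exact iUnion_mono fun k => preimage_smallImage_subset f (B k)

end transfer

section halfSup

variable {K : Type*}

def superlevelHalfSup (g : K → ℝ) : Set K :=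
  if 0 < ⨆ x, g x then {x | (⨆ y, g y) / 2 < g x} else univ

lemma isOpen_superlevelHalfSup [TopologicalSpace K] {g : K → ℝ} (hg : Continuous g) :
    IsOpen (superlevelHalfSup g) := by
  unfold superlevelHalfSup
  split_ifs
  · exact isOpen_lt continuous_const hg
  · exact isOpen_univ

lemma superlevelHalfSup_nonempty [Nonempty K] (g : K → ℝ) : (superlevelHalfSup g).Nonempty := by
  unfold superlevelHalfSup
  split_ifs with hpos
  · exact exists_lt_of_lt_ciSup (half_lt_self hpos)
  · exact univ_nonempty

lemma iSup_le_two_mul_of_mem_superlevelHalfSup {g : K → ℝ} (hg : ∀ x, 0 ≤ g x) {x : K}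
    (hx : x ∈ superlevelHalfSup g) : ⨆ y, g y ≤ 2 * g x := by
  unfold superlevelHalfSup at hx
  split_ifs at hx with hpos
  · have hx : (⨆ y, g y) / 2 < g x := hx
    linarith
  · linarith [hg x, not_lt.mp hpos]

lemma nonpos_of_iSup_le_two_mul [TopologicalSpace K] [CompactSpace K]
    {F : ℕ → K → ℝ} {G : K → ℝ}
    (hF : ∀ k, Continuous (F k)) (hF_anti : Antitone F) (hG : Continuous G)
    (hlim : ∀ x, Tendsto (F · x) atTop (𝓝 (G x))) {b : ℕ → K} (hb : ∀ k, G (b k) ≤ 0)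
    (hsup : ∀ k, ⨆ x, F k x ≤ 2 * F k (b k)) (x : K) : G x ≤ 0 := by
  refine le_of_forall_pos_lt_add fun ε hε => ?_
  have hunif := Metric.tendstoUniformly_iff.mp
    (hF_anti.tendstoUniformly_of_forall_tendsto hF hG hlim) (ε / 2) (half_pos hε)
  obtain ⟨k, hk⟩ := hunif.exists
  have hFb : F k (b k) < ε / 2 := by
    linarith [hb k, (abs_lt.mp (Real.dist_eq _ _ ▸ hk (b k))).1]
  calc G x ≤ F k x := Antitone.le_of_tendsto (fun _ _ hij => hF_anti hij x) (hlim x) k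
    _ ≤ ⨆ y, F k y := le_ciSup (isCompact_range (hF k)).bddAbove x
    _ ≤ 2 * F k (b k) := hsup k
    _ < 0 + ε := by linarith

end halfSup

universe u

section kappa

variable {K : Type u} [TopologicalSpace K]

structure IsKappaMetric (ρ : K → Set K → ℝ) : Prop where
  nonneg : ∀ (x : K) (C : Set K), IsRegularClosed C → C.Nonempty → 0 ≤ ρ x C
  eq_zero_iff : ∀ (x : K) (C : Set K), IsRegularClosed C → C.Nonempty → (ρ x C = 0 ↔ x ∈ C)
  antitone : ∀ (x : K) (C C' : Set K), IsRegularClosed C → C.Nonempty →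
    IsRegularClosed C' → C'.Nonempty → C ⊆ C' → ρ x C' ≤ ρ x C
  continuous : ∀ C : Set K, IsRegularClosed C → C.Nonempty → Continuous fun x => ρ x C
  iInf_chain : ∀ (ι : Type u) [LinearOrder ι] [Nonempty ι] (C : ι → Set K), Monotone C →
    (∀ α, IsRegularClosed (C α) ∧ (C α).Nonempty) →
    ∀ x : K, ρ x (closure (⋃ α, C α)) = ⨅ α, ρ x (C α)

lemma KappaMetrizable.exists_isKappaMetric (hK : KappaMetrizable K) :
    ∃ ρ : K → Set K → ℝ, IsKappaMetric ρ :=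
  let ⟨ρ, h₁, h₂, h₃, h₄, h₅⟩ := hK
  ⟨ρ, h₁, h₂, h₃, h₄, h₅⟩

open Classical in
/-- Taking the interior makes the set whose `ρ`-distance is used regular closed for every list,
not only for lists of open sets. -/
def kappaStrategy (ρ : K → Set K → ℝ) (l : List (Set K)) : Set K :=
  if (closure (interior (⋃ S ∈ l, S))).Nonempty then
    superlevelHalfSup (ρ · (closure (interior (⋃ S ∈ l, S))))
  else univ

lemma kappaStrategy_ofFn (ρ : K → Set K → ℝ) {B : ℕ → Set K} (hB_open : ∀ k, IsOpen (B k))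
    (hB_ne : ∀ k, (B k).Nonempty) (k : ℕ) :
    kappaStrategy ρ (List.ofFn fun i : Fin (k + 1) => B i) =
      superlevelHalfSup (ρ · (closure (accumulate B k))) := by
  rw [kappaStrategy, biUnion_mem_ofFn_eq_accumulate, (isOpen_accumulate hB_open k).interior_eq,
    if_pos ((hB_ne k).mono subset_accumulate).closure]

namespace IsKappaMetric

variable {ρ : K → Set K → ℝ}

lemma antitone_of_monotone (hρ : IsKappaMetric ρ) {C : ℕ → Set K} (hC : Monotone C)
    (hC_reg : ∀ k, IsRegularClosed (C k)) (hC_ne : ∀ k, (C k).Nonempty) :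
    Antitone fun k x => ρ x (C k) :=
  fun i j hij x => hρ.antitone x _ _ (hC_reg i) (hC_ne i) (hC_reg j) (hC_ne j) (hC hij)

lemma continuous_closure_interior (hρ : IsKappaMetric ρ) {s : Set K}
    (hs : (closure (interior s)).Nonempty) : Continuous fun x => ρ x (closure (interior s)) :=
  hρ.continuous _ isOpen_interior.isRegularClosed_closure hs

lemma tendsto_closure_iUnion (hρ : IsKappaMetric ρ) {C : ℕ → Set K} (hC : Monotone C)
    (hC_reg : ∀ k, IsRegularClosed (C k)) (hC_ne : ∀ k, (C k).Nonempty) (x : K) :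
    Tendsto (fun k => ρ x (C k)) atTop (𝓝 (ρ x (closure (⋃ k, C k)))) := by
  -- the chain axiom needs an index type in the universe of `K`
  have hchain := hρ.iInf_chain (ULift.{u} ℕ) (fun j => C j.down) (fun i j hij => hC hij)
    (fun j => ⟨hC_reg _, hC_ne _⟩) x
  rw [ULift.down_surjective.iUnion_comp C, ULift.down_surjective.iInf_comp fun k => ρ x (C k)]
    at hchain
  rw [hchain]
  refine tendsto_atTop_ciInf (fun i j hij => hρ.antitone_of_monotone hC hC_reg hC_ne hij x)
    ⟨0, ?_⟩
  rintro _ ⟨k, rfl⟩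
  exact hρ.nonneg x _ (hC_reg k) (hC_ne k)

lemma dense_iUnion [CompactSpace K] (hρ : IsKappaMetric ρ) {B : ℕ → Set K}
    (hB_open : ∀ k, IsOpen (B k)) (hB_ne : ∀ k, (B k).Nonempty)
    (hB : ∀ k, B (k + 1) ⊆ superlevelHalfSup (ρ · (closure (accumulate B k)))) :
    Dense (⋃ k, B k) := by
  set C : ℕ → Set K := fun k => closure (accumulate B k)
  set L := closure (⋃ k, B k)
  have hC_reg : ∀ k, IsRegularClosed (C k) := fun k =>
    (isOpen_accumulate hB_open k).isRegularClosed_closure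
  have hC_ne : ∀ k, (C k).Nonempty := fun k => ((hB_ne k).mono subset_accumulate).closure
  have hC_mono : Monotone C := fun i j hij => closure_mono (monotone_accumulate hij)
  have hCL : closure (⋃ k, C k) = L := by rw [closure_iUnion_closure, iUnion_accumulate]
  have hL_reg : IsRegularClosed L := (isOpen_iUnion hB_open).isRegularClosed_closure
  have hL_ne : L.Nonempty := ((hB_ne 0).mono (subset_iUnion B 0)).closure
  choose b hb using fun k => hB_ne (k + 1)
  have hL_nonpos : ∀ x, ρ x L ≤ 0 :=
    nonpos_of_iSup_le_two_mul (fun k => hρ.continuous _ (hC_reg k) (hC_ne k))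
      (hρ.antitone_of_monotone hC_mono hC_reg hC_ne) (hρ.continuous L hL_reg hL_ne)
      (fun x => hCL ▸ hρ.tendsto_closure_iUnion hC_mono hC_reg hC_ne x)
      (fun k => ((hρ.eq_zero_iff _ L hL_reg hL_ne).mpr
        (subset_closure (mem_iUnion_of_mem _ (hb k)))).le)
      fun k => iSup_le_two_mul_of_mem_superlevelHalfSup
        (fun x => hρ.nonneg x _ (hC_reg k) (hC_ne k)) (hB k (hb k))
  exact fun x => (hρ.eq_zero_iff x L hL_reg hL_ne).mp
    ((hL_nonpos x).antisymm (hρ.nonneg x L hL_reg hL_ne))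

end IsKappaMetric

lemma KappaMetrizable.iFavorable [CompactSpace K] (hK : KappaMetrizable K) : IFavorable K := by
  obtain ⟨ρ, hρ⟩ := hK.exists_isKappaMetric
  refine ⟨kappaStrategy ρ, fun l => ?_, fun l _ => ?_, fun B hB_open hB_ne _ hB =>
    hρ.dense_iUnion hB_open hB_ne fun k => (hB k).trans (kappaStrategy_ofFn ρ hB_open hB_ne k).le⟩
  all_goals unfold kappaStrategy; split_ifs with h
  · exact isOpen_superlevelHalfSup (hρ.continuous_closure_interior h)
  · exact isOpen_univ
  · exact superlevelHalfSup_nonempty _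
  · exact univ_nonempty

end kappa

theorem ifavorable_of_coabsolute_kappaMetrizable_general {K : Type u} {Y Z : Type*}
    [TopologicalSpace K] [CompactSpace K] [TopologicalSpace Y]
    [TopologicalSpace Z] (hK : KappaMetrizable K)
    (θK : Z → K) (θY : Z → Y)
    (hθK : ClosedIrreducibleSurjection θK) (hθY : ClosedIrreducibleSurjection θY) :
    IFavorable Y :=
  (hK.iFavorable.comap hθK).map hθY

/-- Every space co-absolute to a κ-metrizable compact Hausdorff space is
I-favorable: if `K` is a κ-metrizable compact Hausdorff space and there are closed
irreducible continuous surjections `Z → K` and `Z → Y`, then `Y` is I-favorable. -/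
theorem ifavorable_of_coabsolute_kappaMetrizable {K : Type u} {Y Z : Type*}
    [TopologicalSpace K] [CompactSpace K] [T2Space K] [TopologicalSpace Y]
    [TopologicalSpace Z] (hK : KappaMetrizable K)
    (θK : Z → K) (θY : Z → Y)
    (hθK : ClosedIrreducibleSurjection θK) (hθY : ClosedIrreducibleSurjection θY) :
    IFavorable Y :=
  ifavorable_of_coabsolute_kappaMetrizable_general hK θK θY hθK hθY
end

section
/- Let Γ be a set, let X ⊆ ℝ^Γ be C-embedded in ℝ^Γ, let τ be an infinite cardinal, and let φ : X → ℝ^τ be a continuous map. Then there exists a subset B ⊆ Γ with |B| ≤ τ such that φ factors through the restricted projection π_B|X : X → π_B(X); that is, there is a continuous map h : π_B(X) → ℝ^τ with φ = h ∘ (π_B|X), where π_B : ℝ^Γ → ℝ^B is the coordinate projection. -/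
/-!
A continuous `g : ℝ^Γ → ℝ` depends on only countably many coordinates, because `ℝ^Γ` satisfies
the countable chain condition: an uncountable disjoint family of nonempty open sets would contain
one of size `ℵ₁`, whose members are told apart by at most `ℵ₁ ≤ 𝔠` coordinates, while `ℝ^A` is
separable for `|A| ≤ 𝔠` (Hewitt–Marczewski–Pondiczery, here by Lagrange interpolation). Hence
for each `ε` a maximal disjoint family of cylinders on which `g` oscillates by at most `ε` is
countable, and the coordinates of its members determine `g` up to `3ε`.

Extending each `φ i` to some continuous `g i` on `ℝ^Γ`, the union `B` of the countable sets of
coordinates of the `g i` has `|B| ≤ |ι|`, and `h z i := g i (z extended by zero)` works.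
-/

universe u v

/-- `X` is C-embedded in `ℝ^Γ`: every continuous real-valued function on `X` extends
to a continuous real-valued function on `ℝ^Γ`. -/
def CEmbedded {Γ : Type u} (X : Set (Γ → ℝ)) : Prop :=
  ∀ f : ↥X → ℝ, Continuous f →
    ∃ g : (Γ → ℝ) → ℝ, Continuous g ∧ ∀ x : ↥X, g ↑x = f x

open Set Function TopologicalSpace Cardinal

theorem Cardinal.lift_mk_iUnion_le_of_countable {α : Type u} {ι : Type v} [Infinite ι]
    {A : ι → Set α} (hA : ∀ i, (A i).Countable) : lift.{v} #(⋃ i, A i) ≤ lift.{u} #ι := by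
  have hsup : ⨆ i, lift.{v} #(A i) ≤ ℵ₀ :=
    ciSup_le' fun i => by simpa using (hA i).le_aleph0
  calc lift.{v} #(⋃ i, A i) ≤ lift.{u} #ι * ⨆ i, lift.{v} #(A i) := mk_iUnion_le_lift A
    _ ≤ lift.{u} #ι * ℵ₀ := by gcongr
    _ = lift.{u} #ι := mul_aleph0_eq (by simp)

theorem exists_pairwiseDisjoint_forall_inter_nonempty {α : Type*} (𝒮 : Set (Set α))
    (h𝒮 : ∀ W ∈ 𝒮, W.Nonempty) :
    ∃ 𝒱 ⊆ 𝒮, 𝒱.PairwiseDisjoint id ∧ ∀ W ∈ 𝒮, ∃ V ∈ 𝒱, (W ∩ V).Nonempty := by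
  obtain ⟨𝒱, ⟨h𝒱𝒮, h𝒱⟩, hmax⟩ := zorn_subset {𝒱 | 𝒱 ⊆ 𝒮 ∧ 𝒱.PairwiseDisjoint id}
    fun c hc hchain => ⟨⋃₀ c, ⟨sUnion_subset fun _ h => (hc h).1,
      (hchain.pairwiseDisjoint_sUnion id).2 fun _ h => (hc h).2⟩, fun _ => subset_sUnion_of_mem⟩
  refine ⟨𝒱, h𝒱𝒮, h𝒱, fun W hW => ?_⟩
  by_contra! hdisj
  have hW𝒱 : W ∈ 𝒱 := hmax ⟨insert_subset hW h𝒱𝒮, h𝒱.insert fun V hV _ =>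
    disjoint_iff_inter_eq_empty.2 (hdisj V hV)⟩ (subset_insert W 𝒱) (mem_insert W 𝒱)
  simpa [(h𝒮 W hW).ne_empty] using hdisj W hW𝒱

section Pi

variable {ι : Type*} {π : ι → Type*}

theorem dependsOn_mem_pi (s : Set ι) (I : ∀ i, Set (π i)) : DependsOn (· ∈ s.pi I) s :=
  fun x y h => by
    simp only [mem_pi]
    exact propext (forall₂_congr fun i hi => by rw [h i hi])

theorem DependsOn.mem_inter {s t : Set (∀ i, π i)} {S : Set ι} (hs : DependsOn (· ∈ s) S)
    (ht : DependsOn (· ∈ t) S) : DependsOn (· ∈ s ∩ t) S :=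
  fun _ _ h => congrArg₂ And (hs h) (ht h)

variable [∀ i, TopologicalSpace (π i)]

theorem IsOpen.exists_finset_forall_eq_mem {V : Set (∀ i, π i)} (hV : IsOpen V) {x : ∀ i, π i}
    (hx : x ∈ V) : ∃ F : Finset ι, ∀ y, (∀ i ∈ F, y i = x i) → y ∈ V := by
  obtain ⟨F, u, hu, hFV⟩ := isOpen_pi_iff.1 hV x hx
  exact ⟨F, fun y hy => hFV fun i hi => hy i hi ▸ (hu i hi).2⟩

theorem Continuous.exists_finset_pi_mem_dist_le {β : Type*} [PseudoMetricSpace β]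
    {g : (∀ i, π i) → β} (hg : Continuous g) (x : ∀ i, π i) {ε : ℝ} (hε : 0 < ε) :
    ∃ (F : Finset ι) (I : ∀ i, Set (π i)), (∀ i ∈ F, IsOpen (I i)) ∧ x ∈ (F : Set ι).pi I ∧
      ∀ a ∈ (F : Set ι).pi I, ∀ b ∈ (F : Set ι).pi I, dist (g a) (g b) ≤ ε := by
  obtain ⟨F, I, hI, hFI⟩ := isOpen_pi_iff.1 (Metric.isOpen_ball.preimage hg) x
    (Metric.mem_ball_self (half_pos hε))
  refine ⟨F, I, fun i hi => (hI i hi).1, fun i hi => (hI i hi).2, fun a ha b hb => ?_⟩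
  have ha' : dist (g a) (g x) < ε / 2 := hFI ha
  have hb' : dist (g b) (g x) < ε / 2 := hFI hb
  linarith [dist_triangle_right (g a) (g b) (g x)]

end Pi

open scoped Classical in
noncomputable def extendByZero {Γ β : Type*} [Zero β] (A : Set Γ) (z : A → β) : Γ → β :=
  fun γ => if h : γ ∈ A then z ⟨γ, h⟩ else 0

section extendByZero

variable {Γ β : Type*} [Zero β] {A : Set Γ}

theorem continuous_extendByZero [TopologicalSpace β] :
    Continuous (extendByZero A : (A → β) → Γ → β) :=
  continuous_pi fun γ => by
    by_cases h : γ ∈ A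
    · simpa only [extendByZero, dif_pos h] using continuous_apply _
    · simpa only [extendByZero, dif_neg h] using continuous_const

theorem extendByZero_domRestrict_apply (x : Γ → β) {γ : Γ} (hγ : γ ∈ A) :
    extendByZero A (A.domRestrict x) γ = x γ := by
  simp [extendByZero, hγ, Set.domRestrict]

end extendByZero

theorem separableSpace_pi_of_injective {Γ : Type*} {e : Γ → ℝ} (he : Injective e) :
    SeparableSpace (Γ → ℝ) := by
  classical
  set D : Set (Γ → ℝ) :=
    ⋃ n, range fun c : Fin n → ℝ => fun γ => ∑ k : Fin n, c k * e γ ^ (k : ℕ)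
  have hpoly : ∀ p : Polynomial ℝ, (fun γ => p.eval (e γ)) ∈ D := fun p =>
    mem_iUnion.2 ⟨p.natDegree + 1, fun k => p.coeff k, funext fun γ => by
      simp only [Polynomial.eval_eq_sum_range, Fin.sum_univ_eq_sum_range
        (fun k => p.coeff k * e γ ^ k)]⟩
  have hdense : Dense D := by
    refine dense_iff_inter_open.2 fun U hU ⟨x, hxU⟩ => ?_
    obtain ⟨F, u, hu, hFU⟩ := isOpen_pi_iff.1 hU x hxU
    set p := Lagrange.interpolate F e x
    refine ⟨fun γ => p.eval (e γ), hFU fun γ hγ => ?_, hpoly p⟩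
    simpa only [p, Lagrange.eval_interpolate_at_node _ he.injOn hγ] using (hu γ hγ).2
  exact hdense.isSeparable_iff.1 (isSeparable_iUnion.2 fun n => isSeparable_range (by fun_prop))

theorem Set.PairwiseDisjoint.countable_of_isOpen_pi_real {Γ : Type*} {𝒱 : Set (Set (Γ → ℝ))}
    (h𝒱 : 𝒱.PairwiseDisjoint id) (ho : ∀ V ∈ 𝒱, IsOpen V) (hne : ∀ V ∈ 𝒱, V.Nonempty) :
    𝒱.Countable := by
  by_contra hunc
  obtain ⟨𝒲, h𝒲𝒱, h𝒲⟩ := le_mk_iff_exists_subset.1 <| succ_aleph0 ▸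
    Order.succ_le_of_lt (not_le.1 (le_aleph0_iff_set_countable.not.2 hunc))
  have hcyl : ∀ V ∈ 𝒱, ∃ x : Γ → ℝ, ∃ F : Finset Γ, ∀ y, (∀ γ ∈ F, y γ = x γ) → y ∈ V :=
    fun V hV => (hne V hV).imp fun x hx => (ho V hV).exists_finset_forall_eq_mem hx
  choose! x F hF using hcyl
  set A := ⋃ V : 𝒲, (F V : Set Γ)
  have : Infinite 𝒲 := infinite_iff.2 (h𝒲 ▸ aleph0_lt_aleph_one.le)
  obtain ⟨e⟩ : Nonempty (A ↪ ℝ) := by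
    have hA : #A ≤ #𝒲 := by
      simpa only [lift_id] using lift_mk_iUnion_le_of_countable fun V : 𝒲 => (F V).countable_toSet
    refine lift_mk_le'.1 ?_
    rw [lift_uzero, mk_real, lift_continuum]
    exact hA.trans (h𝒲.trans_le aleph_one_le_continuum)
  have := separableSpace_pi_of_injective e.injective
  refine (h𝒲 ▸ aleph0_lt_aleph_one).not_ge (le_aleph0_iff_set_countable.2 ?_)
  refine PairwiseDisjoint.countable_of_isOpen (s := fun V => extendByZero A ⁻¹' V)
    (fun V hV W hW hVW => (h𝒱 (h𝒲𝒱 hV) (h𝒲𝒱 hW) hVW).preimage _)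
    (fun V hV => (ho V (h𝒲𝒱 hV)).preimage continuous_extendByZero)
    fun V hV => ⟨A.domRestrict (x V), hF V (h𝒲𝒱 hV) _ fun γ hγ =>
      extendByZero_domRestrict_apply _ (mem_iUnion.2 ⟨⟨V, hV⟩, hγ⟩)⟩

section SmallCylinder

variable {Γ : Type*} {g : (Γ → ℝ) → ℝ}

def IsSmallCylinder (g : (Γ → ℝ) → ℝ) (ε : ℝ) (W : Set (Γ → ℝ)) : Prop :=
  IsOpen W ∧ W.Nonempty ∧ (∃ F : Finset Γ, DependsOn (· ∈ W) (F : Set Γ)) ∧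
    ∀ a ∈ W, ∀ b ∈ W, dist (g a) (g b) ≤ ε

theorem dist_le_of_forall_isSmallCylinder_inter_nonempty (hg : Continuous g) {ε : ℝ}
    (hε : 0 < ε) {𝒱 : Set (Set (Γ → ℝ))} {A : Set Γ}
    (hhit : ∀ W, IsSmallCylinder g ε W → ∃ V ∈ 𝒱, (W ∩ V).Nonempty)
    (h𝒱 : ∀ V ∈ 𝒱, DependsOn (· ∈ V) A ∧ ∀ a ∈ V, ∀ b ∈ V, dist (g a) (g b) ≤ ε)
    {x y : Γ → ℝ} (hxy : ∀ γ ∈ A, x γ = y γ) : dist (g x) (g y) ≤ 3 * ε := by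
  classical
  obtain ⟨F, I, hI, hxI, hgI⟩ := hg.exists_finset_pi_mem_dist_le x hε
  obtain ⟨F', I', hI', hyI', hgI'⟩ := hg.exists_finset_pi_mem_dist_le y hε
  -- `W` imposes `y`'s box on the coordinates in `A` so that a point `p ∈ W ∩ V`, glued to `y`
  -- off `A`, stays in `V` and enters `y`'s box.
  set W := (F : Set Γ).pi I ∩ ((F' : Set Γ) ∩ A).pi I'
  have hW : IsSmallCylinder g ε W := by
    refine ⟨(isOpen_set_pi F.finite_toSet hI).inter
      (isOpen_set_pi (F'.finite_toSet.subset inter_subset_left) fun γ hγ => hI' γ hγ.1),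
      ⟨x, hxI, fun γ hγ => hxy γ hγ.2 ▸ hyI' γ hγ.1⟩, ⟨F ∪ F', ?_⟩,
      fun a ha b hb => hgI a ha.1 b hb.1⟩
    rw [Finset.coe_union]
    exact ((dependsOn_mem_pi _ I).mono subset_union_left).mem_inter
      ((dependsOn_mem_pi _ I').mono (inter_subset_left.trans subset_union_right))
  obtain ⟨V, hV, p, ⟨hpI, hpI'⟩, hpV⟩ := hhit W hW
  set q := A.piecewise p y
  have hqV : q ∈ V :=
    cast ((h𝒱 V hV).1 fun γ hγ => (piecewise_eq_of_mem A p y hγ).symm) hpV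
  have hqI' : q ∈ (F' : Set Γ).pi I' := fun γ hγ => by
    by_cases hγA : γ ∈ A
    · simpa [q, hγA] using hpI' γ ⟨hγ, hγA⟩
    · simpa [q, hγA] using hyI' γ hγ
  calc dist (g x) (g y) ≤ dist (g x) (g p) + dist (g p) (g q) + dist (g q) (g y) :=
        dist_triangle4 _ _ _ _
    _ ≤ ε + ε + ε := by
        gcongr
        exacts [hgI x hxI p hpI, (h𝒱 V hV).2 p hpV q hqV, hgI' q hqI' y hyI']
    _ = 3 * ε := by ring

theorem Continuous.exists_countable_forall_dist_le (hg : Continuous g) {ε : ℝ} (hε : 0 < ε) :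
    ∃ A : Set Γ, A.Countable ∧
      ∀ x y : Γ → ℝ, (∀ γ ∈ A, x γ = y γ) → dist (g x) (g y) ≤ 3 * ε := by
  obtain ⟨𝒱, h𝒱𝒮, h𝒱, hhit⟩ :=
    exists_pairwiseDisjoint_forall_inter_nonempty {W | IsSmallCylinder g ε W} fun W hW => hW.2.1
  have h𝒱c : 𝒱.Countable :=
    h𝒱.countable_of_isOpen_pi_real (fun V hV => (h𝒱𝒮 hV).1) fun V hV => (h𝒱𝒮 hV).2.1
  choose! F hF using fun V (hV : V ∈ 𝒱) => (h𝒱𝒮 hV).2.2.1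
  refine ⟨⋃ V ∈ 𝒱, (F V : Set Γ), h𝒱c.biUnion fun V _ => (F V).countable_toSet,
    fun x y hxy => dist_le_of_forall_isSmallCylinder_inter_nonempty hg hε hhit
      (fun V hV => ⟨(hF V hV).mono (subset_biUnion_of_mem hV), (h𝒱𝒮 hV).2.2.2⟩) hxy⟩

theorem Continuous.exists_countable_dependsOn (hg : Continuous g) :
    ∃ A : Set Γ, A.Countable ∧ DependsOn g A := by
  choose A hA hgA using fun n : ℕ =>
    hg.exists_countable_forall_dist_le (Nat.one_div_pos_of_nat (n := n))
  refine ⟨⋃ n, A n, countable_iUnion hA, fun x y hxy => eq_of_forall_dist_le fun ε hε => ?_⟩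
  obtain ⟨n, hn⟩ := exists_nat_one_div_lt (div_pos hε three_pos)
  calc dist (g x) (g y) ≤ 3 * (1 / ((n : ℝ) + 1)) :=
        hgA n x y fun γ hγ => hxy γ (mem_iUnion_of_mem n hγ)
    _ ≤ ε := by linarith

end SmallCylinder

/-- Let `X ⊆ ℝ^Γ` be C-embedded in `ℝ^Γ`, let `τ` be an infinite cardinal
(the cardinality of the index type `ι`), and let `φ : X → ℝ^τ` be continuous. Then there
is `B ⊆ Γ` with `|B| ≤ τ` such that `φ` factors through the restricted projection
`π_B|X : X → π_B(X)` via a continuous map `h : π_B(X) → ℝ^τ`. -/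
theorem factors_through_projection {Γ : Type u} {ι : Type v} [Infinite ι]
    (X : Set (Γ → ℝ)) (hX : CEmbedded X) (φ : ↥X → ι → ℝ) (hφ : Continuous φ) :
    ∃ B : Set Γ,
      Cardinal.lift.{v} (Cardinal.mk ↥B) ≤ Cardinal.lift.{u} (Cardinal.mk ι) ∧
      ∃ h : ↥(Set.range fun x : ↥X => fun b : ↥B => (x : Γ → ℝ) b) → ι → ℝ,
        Continuous h ∧
        ∀ x : ↥X, φ x = h ⟨fun b => (x : Γ → ℝ) b, Set.mem_range_self x⟩ := by
  choose g hg hgφ using fun i : ι => hX (fun x => φ x i) ((continuous_apply i).comp hφ)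
  choose A hA hgA using fun i => (hg i).exists_countable_dependsOn
  refine ⟨⋃ i, A i, lift_mk_iUnion_le_of_countable hA, fun z i => g i (extendByZero _ z.1),
    continuous_pi fun i => (hg i).comp (continuous_extendByZero.comp continuous_subtype_val),
    fun x => funext fun i => ?_⟩
  rw [← hgφ i x]
  exact hgA i fun γ hγ => (extendByZero_domRestrict_apply _ (mem_iUnion_of_mem i hγ)).symm
end

section
/- For a compact Hausdorff space X, X is I-favorable if and only if its superextension λX is I-favorable. -/
universe u

/-- A maximal linked system on `X`: a family of nonempty closed subsets of `X`, any two
members of which intersect, which is maximal among such families (any nonempty closed set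
meeting every member already belongs to the family). -/
structure MaxLinked (X : Type u) [TopologicalSpace X] where
  sets : Set (Set X)
  isClosed' : ∀ F ∈ sets, IsClosed F
  nonempty' : ∀ F ∈ sets, F.Nonempty
  linked' : ∀ F ∈ sets, ∀ G ∈ sets, (F ∩ G).Nonempty
  maximal' : ∀ F : Set X, IsClosed F → F.Nonempty →
    (∀ G ∈ sets, (F ∩ G).Nonempty) → F ∈ sets

/-- For `H ⊆ X`, the set `H⁺ = {ξ ∈ λX : F ⊆ H for some F ∈ ξ}`. -/
def MaxLinked.plus {X : Type u} [TopologicalSpace X] (H : Set X) : Set (MaxLinked X) :=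
  {ξ | ∃ F ∈ ξ.sets, F ⊆ H}

/-- The superextension topology on `λX`: generated by the sets `U⁺` with `U` open in `X`
(finite intersections `[U₁⁺, …, U_k⁺]` of such sets form a base). -/
instance MaxLinked.instTopologicalSpace (X : Type u) [TopologicalSpace X] :
    TopologicalSpace (MaxLinked X) :=
  TopologicalSpace.generateFrom {S | ∃ U : Set X, IsOpen U ∧ S = MaxLinked.plus U}

/-!
Both directions pass through the basic open sets `[U₁⁺, …, U_k⁺]` of `λX`: for `X` a T₁ space
such a set is nonempty exactly when `U₁, …, U_k` are linked, since finite sets are closed and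
points chosen in the pairwise intersections give a linked family of finite sets.

If `λX` is I-favorable, each basic move `[F₁⁺, …, F_m⁺]` of its strategy is simulated on `X` by
proposing `F₁, …, F_m` one after the other. The union `A` of the answers meets every `Fᵢ`, so
`[A⁺, F₁⁺, …, F_m⁺]` is a legal answer on `λX`; the answers on `λX` are dense, and `U⁺` meets
`A⁺` only if `U` meets `A`.

If `X` is I-favorable with strategy `σ`, every family `P` of open sets closed under `σ`, `∩` and
`∪` is rich in witnesses: each nonempty open `U` has a nonempty `V ∈ P` all of whose nonempty
`P`-subsets meet `U`, for otherwise the opponent could beat `σ` inside `P`. The strategy on `λX`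
grows a countable such `P` out of the opponent's moves and answers, in turn, with every linked
list over `P`. Once it has answered with linked witnesses for a basic neighbourhood, the
opponent's next move meets that neighbourhood.
-/

open Set

section Lists

variable {α : Type*}

theorem List.ofFn_succ_eq_append (B : ℕ → α) (k : ℕ) :
    (List.ofFn fun i : Fin (k + 1) => B i) = (List.ofFn fun i : Fin k => B i) ++ [B k] := by
  rw [List.ofFn_succ', List.concat_eq_append]
  rfl

theorem List.foldl_ofFn_succ {β : Type*} (f : β → α → β) (b : β) (B : ℕ → α) (k : ℕ) :
    (List.ofFn fun i : Fin (k + 1) => B i).foldl f b =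
      f ((List.ofFn fun i : Fin k => B i).foldl f b) (B k) := by
  rw [List.ofFn_succ_eq_append, List.foldl_concat]

theorem List.ofFn_eq_take_ofFn (B : ℕ → α) {m n : ℕ} (h : m ≤ n) :
    (List.ofFn fun i : Fin m => B i) = (List.ofFn fun i : Fin n => B i).take m :=
  List.ext_getElem (by simp [h]) (by simp)

theorem exists_seq_of_prefix_chain {h : ℕ → List α} (hmono : ∀ k, h k <+: h (k + 1))
    (hlen : ∀ n, ∃ k, n ≤ (h k).length) :
    ∃ M : ℕ → α, ∀ k, h k = List.ofFn fun i : Fin (h k).length => M i := by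
  have hchain : ∀ k k', k ≤ k' → h k <+: h k' := fun k k' hkk' => by
    induction k', hkk' using Nat.le_induction with
    | base => exact List.prefix_refl _
    | succ n _ ih => exact ih.trans (hmono n)
  choose K hK using fun t => hlen (t + 1)
  refine ⟨fun t => (h (K t))[t]'(hK t), fun k => List.ext_getElem (by simp) fun i hi _ => ?_⟩
  rw [List.getElem_ofFn, (hchain k (max k (K i)) (le_max_left _ _)).getElem hi]
  exact ((hchain (K i) (max k (K i)) (le_max_right _ _)).getElem (hK i)).symm

theorem exists_seq_eq_ofFn (f : List α → α) :
    ∃ B : ℕ → α, ∀ k, B k = f (List.ofFn fun i : Fin k => B i) := by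
  let L : ℕ → List α := fun n => Nat.rec [] (fun _ l => l ++ [f l]) n
  have hL : ∀ k, L k = List.ofFn fun i : Fin k => f (L i) := by
    intro k
    induction k with
    | zero => rfl
    | succ k ih => rw [List.ofFn_succ_eq_append (fun i => f (L i)), ← ih]
  exact ⟨fun k => f (L k), fun k => by rw [← hL]⟩

theorem Set.Countable.setOf_forall_mem_list {P : Set α} (hP : P.Countable) :
    {L : List α | ∀ A ∈ L, A ∈ P}.Countable :=
  have := hP.to_subtype
  (countable_range (List.map (Subtype.val : P → α))).mono fun L hL => CanLift.prf L hL

theorem Monotone.exists_forall_mem_of_forall_mem_iUnion {P : ℕ → Set α}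
    (hP : Monotone P) {L : List α} (hL : ∀ A ∈ L, A ∈ ⋃ n, P n) : ∃ n, ∀ A ∈ L, A ∈ P n := by
  classical
  obtain ⟨n, hn⟩ := hP.directed_le.exists_mem_subset_of_finset_subset_biUnion
    (s := L.toFinset) fun A hA => hL A (by simpa using hA)
  exact ⟨n, fun A hA => hn (by simpa using hA)⟩

theorem biUnion_list_mem {ι : Type*} {Q : Set (Set α)} (hQ : ∅ ∈ Q)
    (hQu : ∀ A ∈ Q, ∀ B ∈ Q, A ∪ B ∈ Q) {l : List ι} {f : ι → Set α} (hf : ∀ i ∈ l, f i ∈ Q) :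
    ⋃ i ∈ l, f i ∈ Q := by
  induction l with
  | nil => simpa using hQ
  | cons i l ih =>
    rw [List.forall_mem_cons] at hf
    simpa [iUnion_or, iUnion_union_distrib] using hQu _ hf.1 _ (ih hf.2)

end Lists

section Games

variable {Y : Type*} [TopologicalSpace Y]

structure IsPlay (σ : List (Set Y) → Set Y) (B : ℕ → Set Y) : Prop where
  isOpen : ∀ k, IsOpen (B k)
  nonempty : ∀ k, (B k).Nonempty
  subset : ∀ k, B k ⊆ σ (List.ofFn fun i : Fin k => B i)

def IsWinning (σ : List (Set Y) → Set Y) : Prop :=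
  ∀ B, IsPlay σ B → Dense (⋃ k, B k)

theorem ifavorable_iff :
    IFavorable Y ↔ ∃ σ : List (Set Y) → Set Y,
      (∀ l, IsOpen (σ l)) ∧ (∀ l, Nonempty Y → (σ l).Nonempty) ∧ IsWinning σ := by
  refine exists_congr fun σ => and_congr_right fun _ => and_congr_right fun _ => ?_
  refine ⟨fun h B hB => h B hB.isOpen hB.nonempty (hB.subset 0) fun k => hB.subset (k + 1),
    fun h B hBo hBn hB0 hBs => h B ⟨hBo, hBn, ?_⟩⟩
  rintro (_ | k)
  exacts [hB0, hBs k]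

def IsPartialPlay (σ : List (Set Y) → Set Y) (h : List (Set Y)) : Prop :=
  ∀ p M, p ++ [M] <+: h → IsOpen M ∧ M.Nonempty ∧ M ⊆ σ p

theorem isPartialPlay_nil (σ : List (Set Y) → Set Y) : IsPartialPlay σ [] := by
  intro p M h
  simpa using h.length_le

theorem IsPartialPlay.concat {σ : List (Set Y) → Set Y} {h : List (Set Y)} {M : Set Y}
    (hh : IsPartialPlay σ h) (hMo : IsOpen M) (hMn : M.Nonempty) (hM : M ⊆ σ h) :
    IsPartialPlay σ (h ++ [M]) := by
  intro p M' hp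
  rcases List.prefix_concat_iff.mp hp with hp | hp
  · obtain ⟨rfl, hM'⟩ := List.append_inj' hp rfl
    obtain rfl : M' = M := by simpa using hM'
    exact ⟨hMo, hMn, hM⟩
  · exact hh p M' hp

theorem IsPartialPlay.exists_isPlay {σ : List (Set Y) → Set Y}
    {h : ℕ → List (Set Y)} (hplay : ∀ k, IsPartialPlay σ (h k)) (hmono : ∀ k, h k <+: h (k + 1))
    (hlen : ∀ n, ∃ k, n ≤ (h k).length) :
    ∃ M, IsPlay σ M ∧ ∀ t, ∃ k, M t ∈ h k := by
  obtain ⟨M, hM⟩ := exists_seq_of_prefix_chain hmono hlen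
  have key : ∀ t, ∃ k, (List.ofFn fun i : Fin t => M i) ++ [M t] <+: h k := fun t => by
    obtain ⟨k, hk⟩ := hlen (t + 1)
    refine ⟨k, ?_⟩
    rw [hM k, ← List.ofFn_succ_eq_append, List.ofFn_eq_take_ofFn M hk]
    exact List.take_prefix _ _
  choose K hK using key
  refine ⟨M, ⟨fun t => (hplay _ _ _ (hK t)).1, fun t => (hplay _ _ _ (hK t)).2.1,
    fun t => (hplay _ _ _ (hK t)).2.2⟩, fun t => ⟨K t, (hK t).subset (by simp)⟩⟩

end Games

section Linked

variable {X : Type*}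

def Linked (L : List (Set X)) : Prop :=
  ∀ A ∈ L, ∀ B ∈ L, (A ∩ B).Nonempty

theorem Linked.nonempty {L : List (Set X)} (hL : Linked L) {A : Set X} (hA : A ∈ L) :
    A.Nonempty := by
  simpa using hL A hA A hA

theorem linked_nil : Linked ([] : List (Set X)) := by
  simp [Linked]

theorem linked_append {L₁ L₂ : List (Set X)} :
    Linked (L₁ ++ L₂) ↔
      Linked L₁ ∧ Linked L₂ ∧ ∀ A ∈ L₁, ∀ B ∈ L₂, (A ∩ B).Nonempty := by
  simp only [Linked, List.mem_append]
  refine ⟨fun h => ⟨fun A hA B hB => h A (.inl hA) B (.inl hB),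
    fun A hA B hB => h A (.inr hA) B (.inr hB), fun A hA B hB => h A (.inl hA) B (.inr hB)⟩, ?_⟩
  rintro ⟨h₁, h₂, h₁₂⟩ A (hA | hA) B (hB | hB)
  · exact h₁ A hA B hB
  · exact h₁₂ A hA B hB
  · exact inter_comm A B ▸ h₁₂ B hB A hA
  · exact h₂ A hA B hB

theorem Linked.exists_finite_subsets {L : List (Set X)} (hL : Linked L) :
    ∃ F : Set X → Set X, (∀ A, (F A).Finite) ∧ (∀ A, F A ⊆ A) ∧
      ∀ A ∈ L, ∀ B ∈ L, (F A ∩ F B).Nonempty := by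
  classical
  let p : Set X → Set X → Set X := fun A B => if h : (A ∩ B).Nonempty then {h.some} else ∅
  have hp : ∀ A B, (p A B).Finite ∧ p A B ⊆ A ∩ B := fun A B => by
    by_cases h : (A ∩ B).Nonempty
    · simpa [p, h] using h.some_mem
    · simp [p, h]
  refine ⟨fun A => ⋃ B ∈ L, (p A B ∪ p B A), fun A => ?_, fun A => ?_, fun A hA B hB => ?_⟩
  · exact (List.finite_toSet L).biUnion fun B _ => (hp A B).1.union (hp B A).1
  · exact iUnion₂_subset fun B _ =>
      union_subset ((hp A B).2.trans inter_subset_left) ((hp B A).2.trans inter_subset_right)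
  · have h := hL A hA B hB
    refine ⟨h.some, mem_biUnion hB (.inl ?_), mem_biUnion hA (.inr ?_)⟩ <;> simp [p, h]

def linkedLists (P : Set (Set X)) : Set (List (Set X)) :=
  {L | (∀ A ∈ L, A ∈ P) ∧ Linked L}

theorem nil_mem_linkedLists (P : Set (Set X)) : [] ∈ linkedLists P :=
  ⟨by simp, linked_nil⟩

end Linked

section Witnesses

variable {X : Type*}

def IsWitness (P : Set (Set X)) (V U : Set X) : Prop :=
  ∀ W ∈ P, W.Nonempty → W ⊆ V → (W ∩ U).Nonempty

variable {P : Set (Set X)}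

theorem IsWitness.mono {V U U' : Set X} (h : IsWitness P V U) (hU : U ⊆ U') :
    IsWitness P V U' := fun W hW hWn hWV =>
  (h W hW hWn hWV).mono (inter_subset_inter_right W hU)

theorem isWitness_empty (U : Set X) : IsWitness P ∅ U := fun _ _ ⟨_, hx⟩ hW => (hW hx).elim

theorem IsWitness.union (hP : ∀ A ∈ P, ∀ B ∈ P, A ∩ B ∈ P) {V V' U : Set X} (hV : V ∈ P)
    (h : IsWitness P V U) (h' : IsWitness P V' U) : IsWitness P (V ∪ V') U := by
  intro W hW hWn hWV
  by_cases hWV' : (W ∩ V).Nonempty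
  · exact (h _ (hP W hW V hV) hWV' inter_subset_right).mono
      (inter_subset_inter_left U inter_subset_left)
  · exact h' W hW hWn fun x hx => (hWV hx).resolve_left fun hxV => hWV' ⟨x, hx, hxV⟩

variable [TopologicalSpace X]

structure IsStrategyClosed (σ : List (Set X) → Set X) (P : Set (Set X)) : Prop where
  isOpen : ∀ A ∈ P, IsOpen A
  empty_mem : ∅ ∈ P
  inter_mem : ∀ A ∈ P, ∀ B ∈ P, A ∩ B ∈ P
  union_mem : ∀ A ∈ P, ∀ B ∈ P, A ∪ B ∈ P
  strategy_mem : ∀ l : List (Set X), (∀ A ∈ l, A ∈ P) → σ l ∈ P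

variable {σ : List (Set X) → Set X}

/-- Otherwise the opponent could answer every move of `σ` inside `P` by a nonempty member of
`P` missing `U`, and win. -/
theorem IsStrategyClosed.exists_isWitness (hσ : IsWinning σ)
    (hσn : ∀ l, Nonempty X → (σ l).Nonempty) (hP : IsStrategyClosed σ P) {U : Set X}
    (hUo : IsOpen U) (hUn : U.Nonempty) : ∃ V ∈ P, V.Nonempty ∧ IsWitness P V U := by
  have hσne : ∀ l, (σ l).Nonempty := fun l => hσn l ⟨hUn.some⟩
  by_contra! hcon
  simp only [IsWitness, not_forall, not_nonempty_iff_eq_empty, exists_prop] at hcon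
  choose! g hgP hgn hgV hgU using hcon
  obtain ⟨B, hB⟩ := exists_seq_eq_ofFn fun l => g (σ l)
  have hσP : ∀ k, (∀ i < k, B i ∈ P) → σ (List.ofFn fun i : Fin k => B i) ∈ P := fun k hk =>
    hP.strategy_mem _ fun A hA => by
      obtain ⟨i, rfl⟩ := List.mem_ofFn.mp hA
      exact hk i i.2
  have hBP : ∀ k, B k ∈ P := by
    intro k
    induction k using Nat.strong_induction_on with
    | _ k ih => exact hB k ▸ hgP _ (hσP k ih) (hσne _)
  have hσB : ∀ k, σ (List.ofFn fun i : Fin k => B i) ∈ P := fun k => hσP k fun i _ => hBP i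
  have hplay : IsPlay σ B :=
    ⟨fun k => hP.isOpen _ (hBP k), fun k => hB k ▸ hgn _ (hσB k) (hσne _),
      fun k => hB k ▸ hgV _ (hσB k) (hσne _)⟩
  obtain ⟨x, hxU, hxB⟩ := (hσ B hplay).inter_open_nonempty U hUo hUn
  obtain ⟨k, hk⟩ := mem_iUnion.mp hxB
  have hgk := hgU _ (hσB k) (hσne _)
  rw [← hB k] at hgk
  exact hgk.subset ⟨hk, hxU⟩

/-- The witness of `U` is the union of witnesses of the pairwise intersections `U ∩ U'` and
`U' ∩ U`; two of these unions share the witness of their intersection. -/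
theorem IsStrategyClosed.exists_linked_isWitness (hσ : IsWinning σ)
    (hσn : ∀ l, Nonempty X → (σ l).Nonempty) (hP : IsStrategyClosed σ P) {LU : List (Set X)}
    (hLUo : ∀ U ∈ LU, IsOpen U) (hLU : Linked LU) :
    ∃ LV : List (Set X), (∀ V ∈ LV, V ∈ P) ∧ Linked LV ∧ ∀ U ∈ LU, ∃ V ∈ LV, IsWitness P V U := by
  choose! A hAP hAn hAw using fun U (hU : U ∈ LU) U' (hU' : U' ∈ LU) =>
    hP.exists_isWitness hσ hσn ((hLUo U hU).inter (hLUo U' hU')) (hLU U hU U' hU')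
  let V : Set X → Set X := fun U => ⋃ U' ∈ LU, (A U U' ∪ A U' U)
  have hV : ∀ U ∈ LU, V U ∈ P ∧ IsWitness P (V U) U := fun U hU =>
    biUnion_list_mem (Q := {V | V ∈ P ∧ IsWitness P V U}) ⟨hP.empty_mem, isWitness_empty U⟩
      (fun V₁ h₁ V₂ h₂ => ⟨hP.union_mem _ h₁.1 _ h₂.1, h₁.2.union hP.inter_mem h₁.1 h₂.2⟩)
      fun U' hU' => ⟨hP.union_mem _ (hAP U hU U' hU') _ (hAP U' hU' U hU),
        ((hAw U hU U' hU').mono inter_subset_left).union hP.inter_mem (hAP U hU U' hU')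
          ((hAw U' hU' U hU).mono inter_subset_right)⟩
  refine ⟨LU.map V, ?_, ?_, fun U hU => ⟨V U, List.mem_map_of_mem hU, (hV U hU).2⟩⟩
  · simp only [List.mem_map]
    rintro _ ⟨U, hU, rfl⟩
    exact (hV U hU).1
  · simp only [Linked, List.mem_map]
    rintro _ ⟨U, hU, rfl⟩ _ ⟨U', hU', rfl⟩
    refine (hAn U hU U' hU').mono (subset_inter ?_ ?_)
    · exact subset_biUnion_of_mem (u := fun U' => A U U' ∪ A U' U) hU' |>.trans' subset_union_left
    · exact subset_biUnion_of_mem (u := fun U => A U' U ∪ A U U') hU |>.trans' subset_union_right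

end Witnesses

namespace MaxLinked

variable {X : Type u} [TopologicalSpace X]

/-- The basic open set `[U₁⁺, …, U_k⁺]` of `λX`. -/
def plusInter (L : List (Set X)) : Set (MaxLinked X) :=
  ⋂ U ∈ L, plus U

@[simp]
theorem mem_plusInter {L : List (Set X)} {ξ : MaxLinked X} :
    ξ ∈ plusInter L ↔ ∀ U ∈ L, ξ ∈ plus U :=
  mem_iInter₂

theorem plusInter_append (L₁ L₂ : List (Set X)) :
    plusInter (L₁ ++ L₂) = plusInter L₁ ∩ plusInter L₂ := by
  ext ξ
  simp only [mem_plusInter, List.mem_append, mem_inter_iff]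
  exact ⟨fun h => ⟨fun U hU => h U (.inl hU), fun U hU => h U (.inr hU)⟩,
    fun h U hU => hU.elim (h.1 U) (h.2 U)⟩

theorem plusInter_antitone {L₁ L₂ : List (Set X)} (h : L₁ ⊆ L₂) :
    plusInter L₂ ⊆ plusInter L₁ := fun _ hξ =>
  mem_plusInter.mpr fun U hU => mem_plusInter.mp hξ U (h hU)

theorem isOpen_plus {U : Set X} (hU : IsOpen U) : IsOpen (plus U) :=
  TopologicalSpace.GenerateOpen.basic _ ⟨U, hU, rfl⟩

theorem isOpen_plusInter {L : List (Set X)} (hL : ∀ U ∈ L, IsOpen U) :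
    IsOpen (plusInter L) :=
  (List.finite_toSet L).isOpen_biInter fun U hU => isOpen_plus (hL U hU)

theorem inter_nonempty_of_mem_plus {ξ : MaxLinked X} {U V : Set X} (hU : ξ ∈ plus U)
    (hV : ξ ∈ plus V) : (U ∩ V).Nonempty := by
  obtain ⟨F, hF, hFU⟩ := hU
  obtain ⟨G, hG, hGV⟩ := hV
  exact (ξ.linked' F hF G hG).mono (inter_subset_inter hFU hGV)

theorem linked_of_mem_plusInter {L : List (Set X)} {ξ : MaxLinked X} (hξ : ξ ∈ plusInter L) :
    Linked L := fun A hA B hB =>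
  inter_nonempty_of_mem_plus (mem_plusInter.mp hξ A hA) (mem_plusInter.mp hξ B hB)

theorem exists_plusInter_subset {S : Set (MaxLinked X)} (hS : IsOpen S) {ξ : MaxLinked X}
    (hξ : ξ ∈ S) : ∃ L : List (Set X), (∀ U ∈ L, IsOpen U) ∧ ξ ∈ plusInter L ∧ plusInter L ⊆ S := by
  induction hS generalizing ξ with
  | basic S hS =>
    obtain ⟨U, hU, rfl⟩ := hS
    exact ⟨[U], by simpa using hU, by simpa using hξ, by simp [plusInter]⟩
  | univ => exact ⟨[], by simp, by simp, subset_univ _⟩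
  | inter S T _ _ ihS ihT =>
    obtain ⟨L₁, ho₁, hξ₁, hL₁⟩ := ihS hξ.1
    obtain ⟨L₂, ho₂, hξ₂, hL₂⟩ := ihT hξ.2
    refine ⟨L₁ ++ L₂, ?_, ?_, ?_⟩
    · simpa [or_imp, forall_and] using ⟨ho₁, ho₂⟩
    · rw [plusInter_append]; exact ⟨hξ₁, hξ₂⟩
    · rw [plusInter_append]; exact inter_subset_inter hL₁ hL₂
  | sUnion 𝒮 _ ih =>
    obtain ⟨S, hS, hξS⟩ := hξ
    obtain ⟨L, ho, hξL, hL⟩ := ih S hS hξS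
    exact ⟨L, ho, hξL, hL.trans (subset_sUnion_of_mem hS)⟩

theorem exists_sets_superset {𝓕 : Set (Set X)} (hcl : ∀ F ∈ 𝓕, IsClosed F)
    (hlink : ∀ F ∈ 𝓕, ∀ G ∈ 𝓕, (F ∩ G).Nonempty) :
    ∃ ξ : MaxLinked X, 𝓕 ⊆ ξ.sets := by
  let 𝒮 : Set (Set (Set X)) :=
    {𝓖 | (∀ F ∈ 𝓖, IsClosed F) ∧ ∀ F ∈ 𝓖, ∀ G ∈ 𝓖, (F ∩ G).Nonempty}
  have hchain : ∀ c ⊆ 𝒮, IsChain (· ⊆ ·) c → c.Nonempty → ∃ ub ∈ 𝒮, ∀ s ∈ c, s ⊆ ub := by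
    intro c hc hch _
    refine ⟨⋃₀ c, ⟨?_, ?_⟩, fun s hs => subset_sUnion_of_mem hs⟩
    · rintro F ⟨𝓖, h𝓖, hF⟩
      exact (hc h𝓖).1 F hF
    · rintro F ⟨𝓖, h𝓖, hF⟩ G ⟨𝓗, h𝓗, hG⟩
      rcases hch.total h𝓖 h𝓗 with h | h
      · exact (hc h𝓗).2 F (h hF) G hG
      · exact (hc h𝓖).2 F hF G (h hG)
  obtain ⟨𝓜, h𝓕𝓜, ⟨hcl𝓜, hlink𝓜⟩, hmax⟩ := zorn_subset_nonempty 𝒮 hchain 𝓕 ⟨hcl, hlink⟩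
  refine ⟨⟨𝓜, hcl𝓜, fun F hF => by simpa using hlink𝓜 F hF F hF, hlink𝓜, ?_⟩, h𝓕𝓜⟩
  intro F hFc hFn hF
  have hins : insert F 𝓜 ∈ 𝒮 := by
    refine ⟨forall_mem_insert.mpr ⟨hFc, hcl𝓜⟩, ?_⟩
    rintro G (rfl | hG) H (rfl | hH)
    · simpa using hFn
    · exact hF H hH
    · exact inter_comm G H ▸ hF G hG
    · exact hlink𝓜 G hG H hH
  exact hmax hins (subset_insert F 𝓜) (mem_insert F 𝓜)

open Classical in
/-- A basic open set `[U₁⁺, …, U_k⁺]` inside `S`, given by the list `[U₁, …, U_k]`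
(`[]`, that is all of `λX`, when there is none). -/
noncomputable def basicWithin (S : Set (MaxLinked X)) : List (Set X) :=
  if h : ∃ L : List (Set X), (∀ U ∈ L, IsOpen U) ∧ Linked L ∧ plusInter L ⊆ S then h.choose
  else []

theorem basicWithin_spec (S : Set (MaxLinked X)) :
    (∀ U ∈ basicWithin S, IsOpen U) ∧ Linked (basicWithin S) := by
  unfold basicWithin
  split_ifs with h
  · exact ⟨h.choose_spec.1, h.choose_spec.2.1⟩
  · exact ⟨by simp, linked_nil⟩

theorem plusInter_basicWithin_subset {S : Set (MaxLinked X)} (hS : IsOpen S) (hne : S.Nonempty) :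
    plusInter (basicWithin S) ⊆ S := by
  obtain ⟨ξ, hξ⟩ := hne
  obtain ⟨L, hLo, hξL, hLS⟩ := exists_plusInter_subset hS hξ
  have h : ∃ L : List (Set X), (∀ U ∈ L, IsOpen U) ∧ Linked L ∧ plusInter L ⊆ S :=
    ⟨L, hLo, linked_of_mem_plusInter hξL, hLS⟩
  rw [basicWithin, dif_pos h]
  exact h.choose_spec.2.2

variable [T1Space X]

theorem plusInter_nonempty_iff {L : List (Set X)} : (plusInter L).Nonempty ↔ Linked L := by
  refine ⟨fun ⟨ξ, hξ⟩ => linked_of_mem_plusInter hξ, fun hL => ?_⟩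
  obtain ⟨F, hfin, hFA, hF⟩ := hL.exists_finite_subsets
  obtain ⟨ξ, hξ⟩ := exists_sets_superset (𝓕 := F '' {A | A ∈ L})
    (by rintro _ ⟨A, -, rfl⟩; exact (hfin A).isClosed)
    (by rintro _ ⟨A, hA, rfl⟩ _ ⟨B, hB, rfl⟩; exact hF A hA B hB)
  exact ⟨ξ, mem_plusInter.mpr fun A hA => ⟨F A, hξ ⟨A, hA, rfl⟩, hFA A⟩⟩

instance : Nonempty (MaxLinked X) :=
  ⟨(plusInter_nonempty_iff.mpr linked_nil).some⟩

theorem exists_subset_of_plusInter_subset_plus {L : List (Set X)} (hL : Linked L) (hne : L ≠ [])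
    {V : Set X} (h : plusInter L ⊆ plus V) : ∃ A ∈ L, A ⊆ V := by
  by_contra! hLV
  have hlink : Linked (Vᶜ :: L) := by
    obtain ⟨A, hA⟩ := List.exists_mem_of_ne_nil L hne
    obtain ⟨x, -, hx⟩ := not_subset.mp (hLV A hA)
    refine (linked_append (L₁ := [Vᶜ])).mpr ⟨by simpa [Linked] using ⟨x, hx⟩, hL, ?_⟩
    simp only [List.mem_singleton, forall_eq]
    intro B hB
    obtain ⟨y, hyB, hy⟩ := not_subset.mp (hLV B hB)
    exact ⟨y, hy, hyB⟩
  obtain ⟨ξ, hξ⟩ := plusInter_nonempty_iff.mpr hlink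
  rw [mem_plusInter, List.forall_mem_cons] at hξ
  exact (inter_nonempty_of_mem_plus hξ.1 (h (mem_plusInter.mpr hξ.2))).ne_empty (compl_inter_self V)

theorem dense_of_dense_iUnion {M : ℕ → Set (MaxLinked X)} (hM : Dense (⋃ t, M t))
    {D : Set X} (hD : ∀ t, ∃ A ⊆ D, M t ⊆ plus A) : Dense D := by
  refine dense_iff_inter_open.mpr fun U hU ⟨x, hx⟩ => ?_
  obtain ⟨ξ, hξ⟩ := (plusInter_nonempty_iff (L := [U])).mpr (by simpa [Linked] using ⟨x, hx⟩)
  obtain ⟨η, hηU, hηM⟩ := hM.inter_open_nonempty _ (isOpen_plus hU) ⟨ξ, by simpa using hξ⟩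
  obtain ⟨t, hηt⟩ := mem_iUnion.mp hηM
  obtain ⟨A, hAD, hMA⟩ := hD t
  exact (inter_nonempty_of_mem_plus hηU (hMA hηt)).mono (inter_subset_inter_right U hAD)

variable {σ : List (Set X) → Set X} {P : Set (Set X)}

/-- A basic `[U⁺ : U ∈ LU] ⊆ O` has linked witnesses `LV ⊆ P`; once a move `S t` has been answered
inside `[V⁺ : V ∈ LV]`, any basic `[W⁺ : W ∈ LW] ⊆ S t` with `LW ⊆ P` refines `LV`, so every
member of `LW` meets every member of `LU`, and `S t` meets `O`. -/
theorem dense_iUnion_of_isStrategyClosed (hσ : IsWinning σ)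
    (hσn : ∀ l, Nonempty X → (σ l).Nonempty) (hP : IsStrategyClosed σ P)
    {S : ℕ → Set (MaxLinked X)}
    (hS : ∀ t, ∃ LW, (∀ W ∈ LW, W ∈ P) ∧ Linked LW ∧ plusInter LW ⊆ S t)
    (hfair : ∀ L, (∀ A ∈ L, A ∈ P) → Linked L → ∃ t, S t ⊆ plusInter L) :
    Dense (⋃ t, S t) := by
  refine dense_iff_inter_open.mpr fun O hO ⟨ξ, hξ⟩ => ?_
  obtain ⟨LU, hLUo, hξLU, hLUO⟩ := exists_plusInter_subset hO hξ
  obtain ⟨LV, hLVP, hLV, hwit⟩ :=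
    hP.exists_linked_isWitness hσ hσn hLUo (linked_of_mem_plusInter hξLU)
  obtain ⟨t, ht⟩ := hfair LV hLVP hLV
  obtain ⟨LW, hLWP, hLW, hLWS⟩ := hS t
  have hcross : ∀ C ∈ LW, ∀ U ∈ LU, (C ∩ U).Nonempty := by
    intro C hC U hU
    obtain ⟨V, hV, hVU⟩ := hwit U hU
    obtain ⟨A, hA, hAV⟩ := exists_subset_of_plusInter_subset_plus hLW (List.ne_nil_of_mem hC)
      ((hLWS.trans ht).trans fun η hη => mem_plusInter.mp hη V hV)
    exact (hVU _ (hP.inter_mem _ (hLWP C hC) _ (hLVP V hV))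
      ((hLW C hC A hA).mono (inter_subset_inter_right C hAV)) inter_subset_right).mono
        (inter_subset_inter_left U inter_subset_left)
  obtain ⟨η, hη⟩ := plusInter_nonempty_iff.mpr
    (linked_append.mpr ⟨hLW, linked_of_mem_plusInter hξLU, hcross⟩)
  rw [plusInter_append] at hη
  exact ⟨η, hLUO hη.2, mem_iUnion.mpr ⟨t, hLWS hη.1⟩⟩

end MaxLinked

namespace MaxLinked.Simulation

variable {X : Type u} [TopologicalSpace X]

/-- A position of the simulation of a play on `λX` inside a play on `X`: the moves made so far
on `λX`, the sets still to be proposed on `X` in the current round, and the union of the answers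
received in the current round. -/
structure State (X : Type u) [TopologicalSpace X] where
  hist : List (Set (MaxLinked X))
  todo : List (Set X)
  acc : Set X

variable (Sg : List (Set (MaxLinked X)) → Set (MaxLinked X))

/-- `univ` is proposed before `F₁, …, F_m` so that every round lasts at least one move. -/
noncomputable def round (hist : List (Set (MaxLinked X))) : State X :=
  ⟨hist, univ :: basicWithin (Sg hist), ∅⟩

noncomputable def next (s : State X) (B : Set X) : State X :=
  match s.todo with
  | _ :: R :: rest => ⟨s.hist, R :: rest, s.acc ∪ B⟩
  | _ => round Sg (s.hist ++ [plusInter ((s.acc ∪ B) :: basicWithin (Sg s.hist))])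

noncomputable def strategy (l : List (Set X)) : Set X :=
  (l.foldl (next Sg) (round Sg [])).todo.headD univ

theorem next_of_todo_eq_cons_cons {s : State X} {R R' : Set X} {rest : List (Set X)}
    (h : s.todo = R :: R' :: rest) (B : Set X) : next Sg s B = ⟨s.hist, R' :: rest, s.acc ∪ B⟩ := by
  rw [next, h]

theorem next_of_todo_eq_singleton {s : State X} {R : Set X} (h : s.todo = [R]) (B : Set X) :
    next Sg s B = round Sg (s.hist ++ [plusInter ((s.acc ∪ B) :: basicWithin (Sg s.hist))]) := by
  rw [next, h]

def WellFormed (s : State X) : Prop :=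
  s.todo ≠ [] ∧ s.todo <:+ univ :: basicWithin (Sg s.hist)

theorem wellFormed_round (hist : List (Set (MaxLinked X))) : WellFormed Sg (round Sg hist) :=
  ⟨List.cons_ne_nil _ _, List.suffix_refl _⟩

theorem WellFormed.next {s : State X} (hs : WellFormed Sg s) (B : Set X) :
    WellFormed Sg (next Sg s B) := by
  obtain ⟨hne, hsuf⟩ := hs
  match h : s.todo with
  | [] => exact absurd h hne
  | [R] => exact next_of_todo_eq_singleton Sg h B ▸ wellFormed_round Sg _
  | R :: R' :: rest =>
    rw [next_of_todo_eq_cons_cons Sg h]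
    exact ⟨List.cons_ne_nil _ _, (List.suffix_cons R _).trans (h ▸ hsuf)⟩

theorem wellFormed_foldl (l : List (Set X)) {s : State X} (hs : WellFormed Sg s) :
    WellFormed Sg (l.foldl (next Sg) s) := by
  induction l generalizing s with
  | nil => exact hs
  | cons B l ih => exact ih (hs.next Sg B)

theorem strategy_mem (l : List (Set X)) :
    strategy Sg l ∈ univ :: basicWithin (Sg (l.foldl (next Sg) (round Sg [])).hist) := by
  obtain ⟨hne, hsuf⟩ := wellFormed_foldl Sg l (wellFormed_round Sg [])
  obtain ⟨R, rest, h⟩ := List.exists_cons_of_ne_nil hne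
  rw [strategy, h, List.headD_cons]
  exact hsuf.subset (h ▸ List.mem_cons_self)

theorem hist_prefix_next (s : State X) (B : Set X) : s.hist <+: (next Sg s B).hist := by
  match h : s.todo with
  | R :: R' :: rest => rw [next_of_todo_eq_cons_cons Sg h]
  | [] | [_] => rw [next, h]; exact List.prefix_append _ _

theorem hist_length_lt_of_todo_length (B : ℕ → Set X) {s : ℕ → State X}
    (hs : ∀ k, s (k + 1) = next Sg (s k) (B k)) :
    ∀ m k, (s k).todo.length = m + 1 → (s k).hist.length < (s (k + m + 1)).hist.length := by
  intro m
  induction m with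
  | zero =>
    intro k hk
    obtain ⟨R, h⟩ := List.length_eq_one_iff.mp hk
    rw [hs, next_of_todo_eq_singleton Sg h]
    simp [round]
  | succ m ih =>
    intro k hk
    match h : (s k).todo with
    | R :: R' :: rest =>
      have hk1 := hs k
      rw [next_of_todo_eq_cons_cons Sg h] at hk1
      have := ih (k + 1) (by rw [hk1]; simpa [h] using hk)
      rwa [hk1, show k + 1 + m + 1 = k + (m + 1) + 1 by omega] at this
    | [] | [_] => simp [h] at hk

theorem exists_le_hist_length (B : ℕ → Set X) {s : ℕ → State X}
    (hs : ∀ k, s (k + 1) = next Sg (s k) (B k)) (hwf : ∀ k, WellFormed Sg (s k)) (n : ℕ) :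
    ∃ k, n ≤ (s k).hist.length := by
  induction n with
  | zero => exact ⟨0, Nat.zero_le _⟩
  | succ n ih =>
    obtain ⟨k, hk⟩ := ih
    obtain ⟨m, hm⟩ := Nat.exists_eq_add_one_of_ne_zero (List.length_pos_iff.mpr (hwf k).1).ne'
    exact ⟨k + m + 1, hk.trans_lt (hist_length_lt_of_todo_length Sg B hs m k hm)⟩

structure Invariant (D : Set X) (s : State X) : Prop where
  meets : ∀ R ∈ univ :: basicWithin (Sg s.hist), R ∈ s.todo ∨ (s.acc ∩ R).Nonempty
  isOpen_acc : IsOpen s.acc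
  acc_subset : s.acc ⊆ D
  isPartialPlay : IsPartialPlay Sg s.hist
  subset_plus : ∀ M ∈ s.hist, ∃ A ⊆ D, M ⊆ plus A

theorem invariant_round {D : Set X} {hist : List (Set (MaxLinked X))}
    (hplay : IsPartialPlay Sg hist) (hplus : ∀ M ∈ hist, ∃ A ⊆ D, M ⊆ plus A) :
    Invariant Sg D (round Sg hist) :=
  ⟨fun _ hR => .inl hR, isOpen_empty, empty_subset D, hplay, hplus⟩

variable [T1Space X]

theorem Invariant.next_of_todo_eq_singleton (hSo : ∀ l, IsOpen (Sg l))
    (hSn : ∀ l, (Sg l).Nonempty) {D : Set X} {s : State X} (hs : Invariant Sg D s) {R : Set X}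
    (h : s.todo = [R]) {B : Set X} (hBo : IsOpen B) (hBn : B.Nonempty) (hB : B ⊆ R)
    (hBD : B ⊆ D) : Invariant Sg D (next Sg s B) := by
  obtain ⟨hFo, hFl⟩ := basicWithin_spec (Sg s.hist)
  rw [Simulation.next_of_todo_eq_singleton Sg h]
  set M := plusInter ((s.acc ∪ B) :: basicWithin (Sg s.hist))
  have hMS : M ⊆ Sg s.hist :=
    (plusInter_antitone (List.subset_cons_self _ _)).trans
      (plusInter_basicWithin_subset (hSo _) (hSn _))
  have hMo : IsOpen M :=
    isOpen_plusInter (List.forall_mem_cons.mpr ⟨hs.isOpen_acc.union hBo, hFo⟩)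
  have hMn : M.Nonempty := by
    refine plusInter_nonempty_iff.mpr ((linked_append (L₁ := [s.acc ∪ B])).mpr
      ⟨by simpa [Linked] using hBn.mono subset_union_right, hFl, ?_⟩)
    simp only [List.mem_singleton, forall_eq]
    intro F hF
    rcases hs.meets F (List.mem_cons_of_mem _ hF) with hFR | hacc
    · rw [h, List.mem_singleton] at hFR
      exact hBn.mono (subset_inter subset_union_right (hFR ▸ hB))
    · exact hacc.mono (inter_subset_inter_left _ subset_union_left)
  refine invariant_round Sg (hs.isPartialPlay.concat hMo hMn hMS) ?_
  simp only [List.mem_append, List.mem_singleton]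
  rintro N (hN | rfl)
  · exact hs.subset_plus N hN
  · exact ⟨s.acc ∪ B, union_subset hs.acc_subset hBD,
      fun ξ hξ => mem_plusInter.mp hξ _ List.mem_cons_self⟩

omit [T1Space X] in
theorem Invariant.next_of_todo_eq_cons_cons {D : Set X} {s : State X} (hs : Invariant Sg D s)
    {R R' : Set X} {rest : List (Set X)} (h : s.todo = R :: R' :: rest) {B : Set X}
    (hBo : IsOpen B) (hBn : B.Nonempty) (hB : B ⊆ R) (hBD : B ⊆ D) :
    Invariant Sg D (next Sg s B) := by
  rw [Simulation.next_of_todo_eq_cons_cons Sg h]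
  refine ⟨fun F hF => ?_, hs.isOpen_acc.union hBo, union_subset hs.acc_subset hBD,
    hs.isPartialPlay, hs.subset_plus⟩
  rcases hs.meets F hF with hFR | hacc
  · rw [h, List.mem_cons] at hFR
    rcases hFR with rfl | hF'
    · exact .inr (hBn.mono (subset_inter subset_union_right hB))
    · exact .inl hF'
  · exact .inr (hacc.mono (inter_subset_inter_left _ subset_union_left))

theorem Invariant.next (hSo : ∀ l, IsOpen (Sg l)) (hSn : ∀ l, (Sg l).Nonempty)
    {D : Set X} {s : State X} (hs : Invariant Sg D s) (hwf : WellFormed Sg s) {B : Set X}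
    (hBo : IsOpen B) (hBn : B.Nonempty) (hB : B ⊆ s.todo.headD univ) (hBD : B ⊆ D) :
    Invariant Sg D (next Sg s B) := by
  match h : s.todo with
  | [] => exact absurd h hwf.1
  | [R] => exact hs.next_of_todo_eq_singleton Sg hSo hSn h hBo hBn (by simpa [h] using hB) hBD
  | R :: R' :: rest =>
    exact hs.next_of_todo_eq_cons_cons Sg h hBo hBn (by simpa [h] using hB) hBD

end MaxLinked.Simulation

open MaxLinked MaxLinked.Simulation in
theorem IFavorable.of_superextension {X : Type u} [TopologicalSpace X] [T1Space X]
    (h : IFavorable (MaxLinked X)) : IFavorable X := by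
  obtain ⟨Sg, hSo, hSn, hSw⟩ := ifavorable_iff.mp h
  replace hSn : ∀ l, (Sg l).Nonempty := fun l => hSn l inferInstance
  refine ifavorable_iff.mpr ⟨strategy Sg, fun l => ?_, fun l hX => ?_, fun B hB => ?_⟩
  · rcases List.mem_cons.mp (strategy_mem Sg l) with h | h
    · exact h ▸ isOpen_univ
    · exact (basicWithin_spec _).1 _ h
  · rcases List.mem_cons.mp (strategy_mem Sg l) with h | h
    · exact h ▸ univ_nonempty
    · exact (basicWithin_spec _).2.nonempty h
  set s : ℕ → State X := fun k => (List.ofFn fun i : Fin k => B i).foldl (next Sg) (round Sg [])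
  have hs : ∀ k, s (k + 1) = next Sg (s k) (B k) := List.foldl_ofFn_succ _ _ B
  have hwf : ∀ k, WellFormed Sg (s k) := fun k => wellFormed_foldl Sg _ (wellFormed_round Sg [])
  have hinv : ∀ k, Invariant Sg (⋃ k, B k) (s k) := by
    intro k
    induction k with
    | zero => exact invariant_round Sg (isPartialPlay_nil Sg) (by simp)
    | succ k ih =>
      rw [hs]
      exact ih.next Sg hSo hSn (hwf k) (hB.isOpen k) (hB.nonempty k) (hB.subset k)
        (subset_iUnion B k)
  obtain ⟨M, hM, hMs⟩ := IsPartialPlay.exists_isPlay (fun k => (hinv k).isPartialPlay)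
    (fun k => hs k ▸ hist_prefix_next Sg (s k) (B k)) (exists_le_hist_length Sg B hs hwf)
  refine dense_of_dense_iUnion (hSw M hM) fun t => ?_
  obtain ⟨k, hk⟩ := hMs t
  exact (hinv k).subset_plus _ hk

namespace MaxLinked.Schedule

variable {X : Type u} [TopologicalSpace X] (σ : List (Set X) → Set X)

def enlarge (P : Set (Set X)) (S : Set (MaxLinked X)) : Set (Set X) :=
  P ∪ image2 (· ∩ ·) P P ∪ image2 (· ∪ ·) P P ∪ σ '' {l | ∀ A ∈ l, A ∈ P} ∪
    {A | A ∈ basicWithin S}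

def stage (l : List (Set (MaxLinked X))) : Set (Set X) :=
  l.foldl (enlarge σ) {∅}

theorem subset_enlarge (P : Set (Set X)) (S : Set (MaxLinked X)) : P ⊆ enlarge σ P S :=
  subset_union_left.trans <| subset_union_left.trans <| subset_union_left.trans subset_union_left

theorem countable_foldl_enlarge (l : List (Set (MaxLinked X))) {P : Set (Set X)}
    (hP : P.Countable) : (l.foldl (enlarge σ) P).Countable := by
  induction l generalizing P with
  | nil => exact hP
  | cons S l ih =>
    exact ih ((((hP.union (hP.image2 hP _)).union (hP.image2 hP _)).union
      (hP.setOf_forall_mem_list.image σ)).union (List.finite_toSet _).countable)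

theorem isOpen_of_mem_foldl_enlarge (hσo : ∀ l, IsOpen (σ l)) (l : List (Set (MaxLinked X)))
    {P : Set (Set X)} (hP : ∀ A ∈ P, IsOpen A) : ∀ A ∈ l.foldl (enlarge σ) P, IsOpen A := by
  induction l generalizing P with
  | nil => exact hP
  | cons S l ih =>
    refine ih ?_
    rintro _ ((((hA | ⟨A, hA, B, hB, rfl⟩) | ⟨A, hA, B, hB, rfl⟩) | ⟨l, -, rfl⟩) | hA)
    exacts [hP _ hA, (hP A hA).inter (hP B hB), (hP A hA).union (hP B hB), hσo l,
      (basicWithin_spec S).1 _ hA]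

theorem isOpen_of_mem_stage (hσo : ∀ l, IsOpen (σ l)) {l : List (Set (MaxLinked X))} {A : Set X}
    (hA : A ∈ stage σ l) : IsOpen A :=
  isOpen_of_mem_foldl_enlarge σ hσo l (by simp) A hA

theorem countable_linkedLists (l : List (Set (MaxLinked X))) :
    (linkedLists (stage σ l)).Countable :=
  (countable_foldl_enlarge σ l (countable_singleton ∅)).setOf_forall_mem_list.mono fun _ hL => hL.1

/-- At time `t = pair n c` answer with the `c`-th linked list over the `n`-th stage, so that every
linked list over some stage is answered at some time. -/
noncomputable def strategy (l : List (Set (MaxLinked X))) : Set (MaxLinked X) :=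
  plusInter (enumerateCountable (countable_linkedLists σ (l.take l.length.unpair.1)) []
    l.length.unpair.2)

theorem exists_strategy_eq (l : List (Set (MaxLinked X))) :
    ∃ L ∈ linkedLists (stage σ (l.take l.length.unpair.1)), strategy σ l = plusInter L :=
  ⟨_, enumerateCountable_mem _ (nil_mem_linkedLists _) _, rfl⟩

theorem strategy_ofFn_pair (S : ℕ → Set (MaxLinked X)) {n : ℕ} {L : List (Set X)}
    (hL : L ∈ linkedLists (stage σ (List.ofFn fun i : Fin n => S i))) :
    ∃ t, strategy σ (List.ofFn fun i : Fin t => S i) = plusInter L := by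
  obtain ⟨c, hc⟩ := subset_range_enumerate (countable_linkedLists σ _) [] hL
  refine ⟨Nat.pair n c, ?_⟩
  simp only [strategy, List.length_ofFn, Nat.unpair_pair,
    ← List.ofFn_eq_take_ofFn S (Nat.left_le_pair n c), hc]

theorem stage_ofFn_succ (S : ℕ → Set (MaxLinked X)) (n : ℕ) :
    stage σ (List.ofFn fun i : Fin (n + 1) => S i) =
      enlarge σ (stage σ (List.ofFn fun i : Fin n => S i)) (S n) :=
  List.foldl_ofFn_succ _ _ S n

theorem monotone_stage_ofFn (S : ℕ → Set (MaxLinked X)) :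
    Monotone fun n => stage σ (List.ofFn fun i : Fin n => S i) :=
  monotone_nat_of_le_succ fun n => stage_ofFn_succ σ S n ▸ subset_enlarge σ _ _

theorem isStrategyClosed_iUnion_stage (hσo : ∀ l, IsOpen (σ l)) (S : ℕ → Set (MaxLinked X)) :
    IsStrategyClosed σ (⋃ n, stage σ (List.ofFn fun i : Fin n => S i)) := by
  set P := fun n => stage σ (List.ofFn fun i : Fin n => S i)
  have hmono : Monotone P := monotone_stage_ofFn σ S
  have hnext : ∀ n, enlarge σ (P n) (S n) ⊆ ⋃ n, P n := fun n =>
    stage_ofFn_succ σ S n ▸ subset_iUnion P (n + 1)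
  have hpair : ∀ A ∈ ⋃ n, P n, ∀ B ∈ ⋃ n, P n, ∃ n, A ∈ P n ∧ B ∈ P n := fun A hA B hB => by
    obtain ⟨n, hn⟩ := hmono.exists_forall_mem_of_forall_mem_iUnion (L := [A, B])
      (by simpa using ⟨mem_iUnion.mp hA, mem_iUnion.mp hB⟩)
    exact ⟨n, hn A (by simp), hn B (by simp)⟩
  refine ⟨fun A hA => ?_, mem_iUnion.mpr ⟨0, rfl⟩, fun A hA B hB => ?_, fun A hA B hB => ?_,
    fun l hl => ?_⟩
  · obtain ⟨n, hn⟩ := mem_iUnion.mp hA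
    exact isOpen_of_mem_stage σ hσo hn
  · obtain ⟨n, hAn, hBn⟩ := hpair A hA B hB
    exact hnext n (.inl (.inl (.inl (.inr ⟨A, hAn, B, hBn, rfl⟩))))
  · obtain ⟨n, hAn, hBn⟩ := hpair A hA B hB
    exact hnext n (.inl (.inl (.inr ⟨A, hAn, B, hBn, rfl⟩)))
  · obtain ⟨n, hn⟩ := hmono.exists_forall_mem_of_forall_mem_iUnion hl
    exact hnext n (.inl (.inr ⟨l, hn, rfl⟩))

end MaxLinked.Schedule

open MaxLinked MaxLinked.Schedule in
theorem IFavorable.superextension {X : Type u} [TopologicalSpace X] [T1Space X]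
    (h : IFavorable X) : IFavorable (MaxLinked X) := by
  obtain ⟨σ, hσo, hσn, hσ⟩ := ifavorable_iff.mp h
  refine ifavorable_iff.mpr ⟨strategy σ, fun l => ?_, fun l _ => ?_, fun S hS => ?_⟩
  · obtain ⟨L, ⟨hLP, -⟩, hL⟩ := exists_strategy_eq σ l
    exact hL ▸ isOpen_plusInter fun U hU => isOpen_of_mem_stage σ hσo (hLP U hU)
  · obtain ⟨L, ⟨-, hL⟩, hLl⟩ := exists_strategy_eq σ l
    exact hLl ▸ plusInter_nonempty_iff.mpr hL
  refine dense_iUnion_of_isStrategyClosed hσ hσn (isStrategyClosed_iUnion_stage σ hσo S)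
    (fun t => ⟨basicWithin (S t), fun W hW => mem_iUnion.mpr ⟨t + 1, ?_⟩,
      (basicWithin_spec _).2, plusInter_basicWithin_subset (hS.isOpen t) (hS.nonempty t)⟩)
    fun L hLP hL => ?_
  · rw [stage_ofFn_succ]
    exact .inr hW
  · obtain ⟨n, hn⟩ := (monotone_stage_ofFn σ S).exists_forall_mem_of_forall_mem_iUnion hLP
    obtain ⟨t, ht⟩ := strategy_ofFn_pair σ S ⟨hn, hL⟩
    exact ⟨t, ht ▸ hS.subset t⟩

theorem ifavorable_iff_superextension_ifavorable_general {X : Type u} [TopologicalSpace X]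
    [T2Space X] :
    IFavorable X ↔ IFavorable (MaxLinked X) :=
  ⟨IFavorable.superextension, IFavorable.of_superextension⟩

/-- A compact Hausdorff space `X` is I-favorable if and only if its
superextension `λX` is I-favorable. -/
theorem ifavorable_iff_superextension_ifavorable {X : Type u} [TopologicalSpace X]
    [CompactSpace X] [T2Space X] :
    IFavorable X ↔ IFavorable (MaxLinked X) :=
  ifavorable_iff_superextension_ifavorable_general
end

section
/- Let X be a compact Hausdorff space whose superextension λX is embedded as a subspace of a Tychonoff cube 𝕀^τ, and suppose there exists a π-regular operator e from the topology of λX to the topology of 𝕀^τ. Then there exists a strongly π-regular operator e₁ from the topology of λX to the topology of 𝕀^τ. -/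
universe u

/-- A π-regular operator for a subspace `X` of `Y` (with inclusion `i`): a function `e`
from the topology of `X` to the topology of `Y` such that `e ∅ = ∅`, `e U ∩ X` is a
dense subset of `U` for every open `U ⊆ X`, and `e U ∩ e V = ∅` whenever `U ∩ V = ∅`. -/
def PiRegularOp {X Y : Type*} [TopologicalSpace X] [TopologicalSpace Y]
    (i : X → Y) (e : Set X → Set Y) : Prop :=
  (∀ U : Set X, IsOpen U → IsOpen (e U)) ∧
  e ∅ = ∅ ∧
  (∀ U : Set X, IsOpen U → i ⁻¹' (e U) ⊆ U ∧ U ⊆ closure (i ⁻¹' (e U))) ∧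
  (∀ U V : Set X, IsOpen U → IsOpen V → U ∩ V = ∅ → e U ∩ e V = ∅)

/-- A strongly π-regular operator: π-regular and in addition `e (U ∩ V) = e U ∩ e V`
for all open `U, V`. -/
def StronglyPiRegularOp {X Y : Type*} [TopologicalSpace X] [TopologicalSpace Y]
    (i : X → Y) (e : Set X → Set Y) : Prop :=
  PiRegularOp i e ∧
  ∀ U V : Set X, IsOpen U → IsOpen V → e (U ∩ V) = e U ∩ e V

open Set TopologicalSpace

section Aux
variable {X : Type u} [TopologicalSpace X]

/-- The subbasis of the superextension topology. -/
def SB (X : Type u) [TopologicalSpace X] : Set (Set (MaxLinked X)) :=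
  {S | ∃ U : Set X, IsOpen U ∧ S = MaxLinked.plus U}

/-- The canonical basis: finite intersections of subbasic sets. -/
def Basics (X : Type u) [TopologicalSpace X] : Set (Set (MaxLinked X)) :=
  (fun f => ⋂₀ f) '' {f | f.Finite ∧ f ⊆ SB X}

lemma basics_isBasis : IsTopologicalBasis (Basics X) :=
  isTopologicalBasis_of_subbasis rfl

lemma isOpen_plus {U : Set X} (hU : IsOpen U) : IsOpen (MaxLinked.plus U) :=
  isOpen_generateFrom_of_mem ⟨U, hU, rfl⟩

lemma isOpen_of_mem_SB {S : Set (MaxLinked X)} (hS : S ∈ SB X) : IsOpen S := by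
  obtain ⟨U, hU, rfl⟩ := hS; exact isOpen_plus hU

lemma isOpen_of_mem_basics {B : Set (MaxLinked X)} (hB : B ∈ Basics X) : IsOpen B := by
  obtain ⟨f, ⟨hf, hfs⟩, rfl⟩ := hB
  exact hf.isOpen_sInter fun S hS => isOpen_of_mem_SB (hfs hS)

/-- Linked families of nonempty closed sets. -/
def LinkedFam (X : Type u) [TopologicalSpace X] : Set (Set (Set X)) :=
  {L | (∀ F ∈ L, IsClosed F ∧ F.Nonempty) ∧ ∀ F ∈ L, ∀ G ∈ L, (F ∩ G).Nonempty}

lemma exists_maxLinked_of_linked {L₀ : Set (Set X)} (h : L₀ ∈ LinkedFam X) :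
    ∃ ξ : MaxLinked X, L₀ ⊆ ξ.sets := by
  obtain ⟨L, hL₀L, hLmem, hLmax⟩ := zorn_subset_nonempty (LinkedFam X)
    (fun c hc hchain hcne => by
      refine ⟨⋃₀ c, ⟨?_, ?_⟩, fun s hs => subset_sUnion_of_mem hs⟩
      · rintro F ⟨L, hLc, hFL⟩
        exact (hc hLc).1 F hFL
      · rintro F ⟨L, hLc, hFL⟩ G ⟨L', hL'c, hGL'⟩
        rcases hchain.total hLc hL'c with hsub | hsub
        · exact (hc hL'c).2 F (hsub hFL) G hGL'
        · exact (hc hLc).2 F hFL G (hsub hGL')) L₀ h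
  refine ⟨⟨L, fun F hF => (hLmem.1 F hF).1, fun F hF => (hLmem.1 F hF).2,
    hLmem.2, fun F hFc hFne hFlink => ?_⟩, hL₀L⟩
  have : L ∪ {F} ∈ LinkedFam X := by
    constructor
    · rintro G (hG | rfl)
      · exact hLmem.1 G hG
      · exact ⟨hFc, hFne⟩
    · rintro G (hG | rfl) G' (hG' | rfl)
      · exact hLmem.2 G hG G' hG'
      · rw [inter_comm]; exact hFlink G hG
      · exact hFlink G' hG'
      · simpa using hFne
  have hsub : L ∪ {F} ⊆ L := hLmax this subset_union_left
  exact hsub (Or.inr rfl)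

instance instNonemptyMaxLinked : Nonempty (MaxLinked X) := by
  obtain ⟨ξ, -⟩ := exists_maxLinked_of_linked (L₀ := (∅ : Set (Set X)))
    ⟨fun F hF => hF.elim, fun F hF => hF.elim⟩
  exact ⟨ξ⟩

lemma plus_inter_nonempty {U V : Set X}
    (h : (MaxLinked.plus U ∩ MaxLinked.plus V).Nonempty) : (U ∩ V).Nonempty := by
  obtain ⟨ξ, ⟨F, hF, hFU⟩, ⟨G, hG, hGV⟩⟩ := h
  obtain ⟨x, hxF, hxG⟩ := ξ.linked' F hF G hG
  exact ⟨x, hFU hxF, hGV hxG⟩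

/-- Key lemma: a finite family of open sets in `X` that pairwise intersect admits a common
maximal linked system in all the corresponding plus-sets. -/
lemma exists_mem_plus_forall [T2Space X] {𝒱 : Set (Set X)} (hfin : 𝒱.Finite)
    (hpair : ∀ V ∈ 𝒱, ∀ W ∈ 𝒱, (V ∩ W).Nonempty) :
    ∃ ξ : MaxLinked X, ∀ V ∈ 𝒱, ξ ∈ MaxLinked.plus V := by
  rcases 𝒱.eq_empty_or_nonempty with rfl | ⟨V₀, hV₀⟩
  · obtain ⟨ξ⟩ := (inferInstance : Nonempty (MaxLinked X))
    exact ⟨ξ, fun V hV => hV.elim⟩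
  classical
  have : Nonempty X := ⟨(hpair V₀ hV₀ V₀ hV₀).choose⟩
  set x : Set X → Set X → X := fun V W =>
    if h : (V ∩ W).Nonempty then h.choose else Classical.arbitrary X with hxdef
  have hx : ∀ V ∈ 𝒱, ∀ W ∈ 𝒱, x V W ∈ V ∩ W := by
    intro V hV W hW
    have h := hpair V hV W hW
    simp only [hxdef, dif_pos h]
    exact h.choose_spec
  set F : Set X → Set X := fun V => (fun W => x V W) '' 𝒱 ∪ (fun W => x W V) '' 𝒱 with hFdef
  have hFsub : ∀ V ∈ 𝒱, F V ⊆ V := by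
    rintro V hV y (⟨W, hW, rfl⟩ | ⟨W, hW, rfl⟩)
    · exact (hx V hV W hW).1
    · exact (hx W hW V hV).2
  have hlinked : F '' 𝒱 ∈ LinkedFam X := by
    constructor
    · rintro G ⟨V, hV, rfl⟩
      refine ⟨((hfin.image _).union (hfin.image _)).isClosed,
        ⟨x V V, Or.inl ⟨V, hV, rfl⟩⟩⟩
    · rintro G ⟨V, hV, rfl⟩ G' ⟨W, hW, rfl⟩
      exact ⟨x V W, Or.inl ⟨W, hW, rfl⟩, Or.inr ⟨V, hV, rfl⟩⟩
  obtain ⟨ξ, hξ⟩ := exists_maxLinked_of_linked hlinked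
  exact ⟨ξ, fun V hV => ⟨F V, hξ ⟨V, hV, rfl⟩, hFsub V hV⟩⟩

/-- Pairwise level lemma at the subbasis level. -/
lemma sInter_nonempty_of_pairwise_SB [T2Space X] {𝒲 : Set (Set (MaxLinked X))}
    (hfin : 𝒲.Finite) (hsub : 𝒲 ⊆ SB X)
    (hpair : ∀ S ∈ 𝒲, ∀ S' ∈ 𝒲, (S ∩ S').Nonempty) : (⋂₀ 𝒲).Nonempty := by
  have h : ∀ S : Set (MaxLinked X), ∃ U : Set X, S ∈ 𝒲 → IsOpen U ∧ S = MaxLinked.plus U := by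
    intro S
    by_cases hS : S ∈ 𝒲
    · obtain ⟨U, hU, hSU⟩ := hsub hS
      exact ⟨U, fun _ => ⟨hU, hSU⟩⟩
    · exact ⟨∅, fun h => absurd h hS⟩
  choose u hu using h
  have hpair' : ∀ V ∈ u '' 𝒲, ∀ W ∈ u '' 𝒲, (V ∩ W).Nonempty := by
    rintro V ⟨S, hS, rfl⟩ W ⟨S', hS', rfl⟩
    apply plus_inter_nonempty
    rw [← (hu S hS).2, ← (hu S' hS').2]
    exact hpair S hS S' hS'
  obtain ⟨ξ, hξ⟩ := exists_mem_plus_forall (X := X) (𝒱 := u '' 𝒲) (hfin.image u) hpair'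
  refine ⟨ξ, fun S hS => ?_⟩
  rw [(hu S hS).2]
  exact hξ (u S) ⟨S, hS, rfl⟩

/-- Finitely many basic sets which pairwise intersect have a common point. -/
lemma sInter_nonempty_of_pairwise_basics [T2Space X] {g : Set (Set (MaxLinked X))}
    (hfin : g.Finite) (hsub : g ⊆ Basics X)
    (hpair : ∀ B ∈ g, ∀ B' ∈ g, (B ∩ B').Nonempty) : (⋂₀ g).Nonempty := by
  have h : ∀ B : Set (MaxLinked X), ∃ f : Set (Set (MaxLinked X)),
      B ∈ g → f.Finite ∧ f ⊆ SB X ∧ B = ⋂₀ f := by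
    intro B
    by_cases hB : B ∈ g
    · obtain ⟨f, ⟨hf1, hf2⟩, hBf⟩ := hsub hB
      exact ⟨f, fun _ => ⟨hf1, hf2, hBf.symm⟩⟩
    · exact ⟨∅, fun h => absurd h hB⟩
  choose f hf using h
  have key := sInter_nonempty_of_pairwise_SB (X := X) (𝒲 := ⋃ B ∈ g, f B)
    (hfin.biUnion fun B hB => (hf B hB).1)
    (by rintro S hS
        simp only [mem_iUnion] at hS
        obtain ⟨B, hB, hSB⟩ := hS
        exact (hf B hB).2.1 hSB)
    (by rintro S hS S' hS'
        simp only [mem_iUnion] at hS hS'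
        obtain ⟨B, hB, hSB⟩ := hS
        obtain ⟨B', hB', hSB'⟩ := hS'
        obtain ⟨ζ, hζB, hζB'⟩ := hpair B hB B' hB'
        refine ⟨ζ, ?_, ?_⟩
        · have := (hf B hB).2.2 ▸ hζB
          exact this S hSB
        · have := (hf B' hB').2.2 ▸ hζB'
          exact this S' hSB')
  obtain ⟨ζ, hζ⟩ := key
  refine ⟨ζ, fun B hB => ?_⟩
  rw [(hf B hB).2.2]
  intro S hS
  exact hζ S (mem_iUnion.2 ⟨B, mem_iUnion.2 ⟨hB, hS⟩⟩)

end Aux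

/-- If the superextension `λX` of a compact Hausdorff space `X` is
embedded in a Tychonoff cube `𝕀^τ` and there exists a π-regular operator from the
topology of `λX` to that of `𝕀^τ`, then there exists a strongly π-regular operator. -/
theorem exists_stronglyPiRegular_of_piRegular {X : Type u} [TopologicalSpace X]
    [CompactSpace X] [T2Space X] {τ : Type v}
    (i : MaxLinked X → (τ → unitInterval)) (hi : Topology.IsEmbedding i)
    (e : Set (MaxLinked X) → Set (τ → unitInterval)) (he : PiRegularOp i e) :
    ∃ e₁ : Set (MaxLinked X) → Set (τ → unitInterval), StronglyPiRegularOp i e₁ := by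
  obtain ⟨heo, he0, hed, hedisj⟩ := he
  set e₁ : Set (MaxLinked X) → Set (τ → unitInterval) := fun U =>
    ⋃₀ {T | ∃ g : Set (Set (MaxLinked X)), g.Finite ∧ g ⊆ Basics X ∧ ⋂₀ g ⊆ U ∧
        T = ⋂ B ∈ g, e B} with he₁def
  -- monotonicity
  have hmono : ∀ U U' : Set (MaxLinked X), U ⊆ U' → e₁ U ⊆ e₁ U' := by
    rintro U U' hUU' y ⟨T, ⟨g, hgf, hgB, hgsub, rfl⟩, hy⟩
    exact ⟨_, ⟨g, hgf, hgB, hgsub.trans hUU', rfl⟩, hy⟩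
  -- openness
  have hopen : ∀ U : Set (MaxLinked X), IsOpen (e₁ U) := by
    intro U
    apply isOpen_sUnion
    rintro T ⟨g, hgf, hgB, hgsub, rfl⟩
    exact hgf.isOpen_biInter fun B hB => heo B (isOpen_of_mem_basics (hgB hB))
  -- e₁ ∅ = ∅
  have hzero : e₁ ∅ = ∅ := by
    rw [eq_empty_iff_forall_notMem]
    rintro y ⟨T, ⟨g, hgf, hgB, hgsub, rfl⟩, hy⟩
    have hne : ¬ (⋂₀ g).Nonempty := by
      rintro ⟨ζ, hζ⟩; exact (hgsub hζ).elim
    have : ¬ ∀ B ∈ g, ∀ B' ∈ g, (B ∩ B').Nonempty := fun h =>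
      hne (sInter_nonempty_of_pairwise_basics hgf hgB h)
    push_neg at this
    obtain ⟨B, hB, B', hB', hBB'⟩ := this
    have hdisj : e B ∩ e B' = ∅ :=
      hedisj B B' (isOpen_of_mem_basics (hgB hB)) (isOpen_of_mem_basics (hgB hB'))
        hBB'
    have hy1 : y ∈ e B := by simp only [Set.mem_iInter] at hy; exact hy B hB
    have hy2 : y ∈ e B' := by simp only [Set.mem_iInter] at hy; exact hy B' hB'
    have : y ∈ e B ∩ e B' := ⟨hy1, hy2⟩
    rw [hdisj] at this
    exact this
  -- multiplicativity
  have hmul : ∀ U V : Set (MaxLinked X), e₁ (U ∩ V) = e₁ U ∩ e₁ V := by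
    intro U V
    apply Set.Subset.antisymm
    · exact Set.subset_inter (hmono _ _ Set.inter_subset_left)
        (hmono _ _ Set.inter_subset_right)
    · rintro y ⟨⟨T₁, ⟨g₁, hg₁f, hg₁B, hg₁sub, rfl⟩, hy₁⟩,
        ⟨T₂, ⟨g₂, hg₂f, hg₂B, hg₂sub, rfl⟩, hy₂⟩⟩
      refine ⟨⋂ B ∈ g₁ ∪ g₂, e B, ⟨g₁ ∪ g₂, hg₁f.union hg₂f,
        Set.union_subset hg₁B hg₂B, ?_, rfl⟩, ?_⟩
      · rw [Set.sInter_union]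
        exact Set.inter_subset_inter hg₁sub hg₂sub
      · simp only [Set.mem_iInter] at hy₁ hy₂ ⊢
        rintro B (hB | hB)
        · exact hy₁ B hB
        · exact hy₂ B hB
  refine ⟨e₁, ⟨⟨fun U _ => hopen U, hzero, ?_, ?_⟩, fun U V _ _ => hmul U V⟩⟩
  · -- density / trace conditions
    intro U hU
    constructor
    · rintro ξ ⟨T, ⟨g, hgf, hgB, hgsub, rfl⟩, hξ⟩
      apply hgsub
      intro B hB
      have : ξ ∈ i ⁻¹' (e B) := by
        simp only [Set.mem_iInter] at hξ
        exact hξ B hB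
      exact (hed B (isOpen_of_mem_basics (hgB hB))).1 this
    · intro ξ hξ
      obtain ⟨B, hBmem, hξB, hBU⟩ :=
        basics_isBasis.exists_subset_of_mem_open hξ hU
      have heB : e B ⊆ e₁ U := by
        apply Set.subset_sUnion_of_mem
        refine ⟨{B}, Set.finite_singleton B, Set.singleton_subset_iff.2 hBmem, ?_, ?_⟩
        · rw [Set.sInter_singleton]; exact hBU
        · simp
      exact closure_mono (Set.preimage_mono heB)
        ((hed B (isOpen_of_mem_basics hBmem)).2 hξB)
  · -- disjointness
    intro U V _ _ hUV
    rw [← hmul U V, hUV, hzero]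
end
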